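/- arXiv:math/0411148 — 2 statements merged into one kernel-verified Lean document; each statement's English description precedes it below -/
import Mathlib

section
/- Let (R(t))_{t≥0} be the resolvent family of the Volterra equation X(t) = ∫₀ᵗ a(t−τ) A X(τ) dτ + X₀ + Z(t) and let Z be an H-valued Lévy process. For w ∈ H let φ(w) := log E[exp(i⟨w, Z(1)⟩_H)] denote the characteristic exponent of Z (so that E[exp(i⟨w, Z(t)⟩_H)] = exp(t φ(w))). Then for every t ≥ 0 the characteristic functional of the stochastic convolution Z_R(t) = ∫₀ᵗ R(t−τ) dZ(τ) is given by E[exp(i⟨y, Z_R(t)⟩_H)] = exp( ∫₀ᵗ φ(R(t−s)* y) ds ) for every y ∈ H, where R(t−s)* denotes the Hilbert-space adjoint of R(t−s). -/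
open MeasureTheory Filter Topology ProbabilityTheory

attribute [local instance] Classical.propDecidable

set_option maxHeartbeats 1000000

noncomputable section

/-- `Z` is an `H`-valued Lévy process on `(Ω, P)`: `Z 0 = 0` a.s., càdlàg paths,
stationary independent increments, continuous in probability. -/
structure IsLevyProcess {Ω : Type*} [MeasurableSpace Ω] {H : Type*}
    [NormedAddCommGroup H] [InnerProductSpace ℝ H]
    [MeasurableSpace H] [BorelSpace H]
    (P : Measure Ω) (Z : ℝ → Ω → H) : Prop where
  measurable : ∀ t : ℝ, Measurable (Z t)
  init : ∀ᵐ ω ∂P, Z 0 ω = 0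
  rightCont : ∀ ω, ∀ t : ℝ, 0 ≤ t → ContinuousWithinAt (fun s => Z s ω) (Set.Ici t) t
  leftLim : ∀ ω, ∀ t : ℝ, 0 < t → ∃ l : H, Tendsto (fun s => Z s ω) (nhdsWithin t (Set.Iio t)) (nhds l)
  stationary : ∀ s t : ℝ, 0 ≤ s → 0 ≤ t →
    Measure.map (fun ω => Z (t + s) ω - Z t ω) P = Measure.map (Z s) P
  indep : ∀ (n : ℕ) (t : Fin (n + 1) → ℝ), 0 ≤ t 0 → Monotone t →
    iIndepFun
      (fun i : Fin n => fun ω => Z (t i.succ) ω - Z (t i.castSucc) ω) P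
  contInProb : ∀ t : ℝ, 0 ≤ t → ∀ ε : ℝ, 0 < ε →
    Tendsto (fun s => P {ω | ε < ‖Z s ω - Z t ω‖}) (nhdsWithin t (Set.Ici 0)) (nhds 0)

/-- A sequence of tagged partitions of `[a,b]` whose mesh tends to `0`. -/
structure PartitionSeq (a b : ℝ) where
  m : ℕ → ℕ
  pt : ℕ → ℕ → ℝ
  tag : ℕ → ℕ → ℝ
  left : ∀ n, pt n 0 = a
  right : ∀ n, pt n (m n) = b
  mono : ∀ n, ∀ k < m n, pt n k < pt n (k + 1)
  tag_mem : ∀ n, ∀ k < m n, tag n k ∈ Set.Icc (pt n k) (pt n (k + 1))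
  mesh : ∀ ε > (0:ℝ), ∃ N, ∀ n ≥ N, ∀ k < m n, pt n (k + 1) - pt n k < ε

/-- `Y` is the stochastic integral `∫_(a,b] F(s) dZ(s)`, i.e. the limit in probability of the
Riemann–Stieltjes sums `∑ₖ F(tagₖ)(Z(s_{k+1}) - Z(sₖ))` along every sequence of tagged
partitions of `[a,b]` with mesh tending to `0`. -/
def IsRSStochIntegral {Ω : Type*} [MeasurableSpace Ω] {H G : Type*}
    [NormedAddCommGroup H] [InnerProductSpace ℝ H]
    [NormedAddCommGroup G] [InnerProductSpace ℝ G]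
    (P : Measure Ω) (F : ℝ → H →L[ℝ] G) (Z : ℝ → Ω → H) (a b : ℝ) (Y : Ω → G) : Prop :=
  ∀ π : PartitionSeq a b,
    TendstoInMeasure P
      (fun n ω => ∑ k ∈ Finset.range (π.m n),
        F (π.tag n k) (Z (π.pt n (k + 1)) ω - Z (π.pt n k) ω))
      atTop Y

/-- `Y` is the stochastic convolution `∫₀ᵗ R(t-τ) dZ(τ)`. -/
def IsStochConvAt {Ω : Type*} [MeasurableSpace Ω] {H : Type*}
    [NormedAddCommGroup H] [InnerProductSpace ℝ H]
    (P : Measure Ω) (R : ℝ → H →L[ℝ] H) (Z : ℝ → Ω → H) (t : ℝ) (Y : Ω → H) : Prop :=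
  IsRSStochIntegral P (fun s => R (t - s)) Z 0 t Y

/-- The family `R` is a resolvent family for the Volterra equation
`u(t) = ∫₀ᵗ a(t-τ) A u(τ) dτ + x` associated with the kernel `a` and the (possibly unbounded)
densely defined operator `A`. -/
structure IsResolventFamily {H : Type*} [NormedAddCommGroup H] [InnerProductSpace ℝ H]
    (a : ℝ → ℝ) (A : H →ₗ.[ℝ] H) (R : ℝ → H →L[ℝ] H) : Prop where
  init : R 0 = ContinuousLinearMap.id ℝ H
  strong_cont : ∀ x ∈ A.domain, ContinuousOn (fun t => R t x) (Set.Ici 0)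
  loc_bdd : ∀ T : ℝ, 0 < T → ∃ C : ℝ, ∀ t ∈ Set.Icc (0:ℝ) T, ‖R t‖ ≤ C
  maps_domain : ∀ t : ℝ, 0 ≤ t → ∀ x ∈ A.domain, R t x ∈ A.domain
  resolvent_eq : ∀ t : ℝ, 0 ≤ t → ∀ x : A.domain,
    R t x = (x : H) + ∫ τ in Set.Ioc (0:ℝ) t,
      a (t - τ) • (if h : R τ (x : H) ∈ A.domain then A ⟨R τ (x : H), h⟩ else 0)

/-- A probability law `μ` on `G` is infinitely divisible: for every `n ≥ 1` it is the `n`-fold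
convolution of some probability measure, i.e. the law of the sum of `n` i.i.d. copies. -/
def InfinitelyDivisible {G : Type*} [MeasurableSpace G] [AddCommMonoid G] (μ : Measure G) : Prop :=
  ∀ n : ℕ, 0 < n → ∃ ν : Measure G, IsProbabilityMeasure ν ∧
    μ = Measure.map (fun x : Fin n → G => ∑ i, x i) (Measure.pi fun _ => ν)



lemma aux_norm_exp_I_mul_sub_one (θ : ℝ) :
    ‖Complex.exp (Complex.I * θ) - 1‖ ≤ |θ| := by
  have h : Complex.exp (Complex.I * θ) - 1
      = Complex.ofReal (Real.cos θ - 1) + Complex.ofReal (Real.sin θ) * Complex.I := by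
    rw [mul_comm, Complex.exp_mul_I]
    rw [← Complex.ofReal_cos, ← Complex.ofReal_sin]
    push_cast
    ring
  rw [h]
  have habs : ‖(Complex.ofReal (Real.cos θ - 1)
      + Complex.ofReal (Real.sin θ) * Complex.I)‖
      = Real.sqrt ((Real.cos θ - 1) ^ 2 + Real.sin θ ^ 2) := by
    rw [Complex.norm_def, Complex.normSq_add_mul_I]
  have hkey : (Real.cos θ - 1) ^ 2 + Real.sin θ ^ 2 = (2 * |Real.sin (θ / 2)|) ^ 2 := by
    have h1 := Real.sin_sq_add_cos_sq (θ / 2)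
    have h2 := Real.cos_sq (θ / 2)
    have h3 : 2 * (θ / 2) = θ := by ring
    rw [h3] at h2
    have h4 := Real.sin_sq_add_cos_sq θ
    have h5 : |Real.sin (θ / 2)| ^ 2 = Real.sin (θ / 2) ^ 2 := sq_abs _
    nlinarith
  show ‖_‖ ≤ _
  rw [habs, hkey, Real.sqrt_sq (by positivity)]
  have := Real.abs_sin_le_abs (x := θ / 2)
  rw [abs_div] at this
  calc 2 * |Real.sin (θ / 2)| ≤ 2 * (|θ| / |(2:ℝ)|) := by linarith
    _ = |θ| := by rw [abs_of_pos (by norm_num : (0:ℝ) < 2)]; ring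

section AuxProb

variable {Ω : Type*} [MeasurableSpace Ω] {P : Measure Ω} [IsProbabilityMeasure P]

lemma aux_integrable_of_bounded {f : Ω → ℂ} (hm : AEStronglyMeasurable f P)
    {C : ℝ} (hb : ∀ ω, ‖f ω‖ ≤ C) : Integrable f P :=
  Integrable.mono' (integrable_const C) hm (Filter.Eventually.of_forall hb)

lemma aux_indep_integral_mul {X Y : Ω → ℂ} (h : IndepFun X Y P)
    (hXm : Measurable X) (hYm : Measurable Y)
    (hX1 : ∀ ω, ‖X ω‖ ≤ 1) (hY1 : ∀ ω, ‖Y ω‖ ≤ 1) :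
    ∫ ω, X ω * Y ω ∂P = (∫ ω, X ω ∂P) * ∫ ω, Y ω ∂P := by
  set a : Ω → ℝ := fun ω => (X ω).re with ha
  set b : Ω → ℝ := fun ω => (X ω).im with hb
  set c : Ω → ℝ := fun ω => (Y ω).re with hc
  set d : Ω → ℝ := fun ω => (Y ω).im with hd
  have hma : Measurable a := Complex.measurable_re.comp hXm
  have hmb : Measurable b := Complex.measurable_im.comp hXm
  have hmc : Measurable c := Complex.measurable_re.comp hYm
  have hmd : Measurable d := Complex.measurable_im.comp hYm
  have hba : ∀ ω, |a ω| ≤ 1 := fun ω => le_trans (Complex.abs_re_le_norm _) (hX1 ω)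
  have hbb : ∀ ω, |b ω| ≤ 1 := fun ω => le_trans (Complex.abs_im_le_norm _) (hX1 ω)
  have hbc : ∀ ω, |c ω| ≤ 1 := fun ω => le_trans (Complex.abs_re_le_norm _) (hY1 ω)
  have hbd : ∀ ω, |d ω| ≤ 1 := fun ω => le_trans (Complex.abs_im_le_norm _) (hY1 ω)
  have hint : ∀ {u : Ω → ℝ}, Measurable u → (∀ ω, |u ω| ≤ 1) → Integrable u P := by
    intro u hu hub
    exact Integrable.mono' (integrable_const 1) hu.aestronglyMeasurable
      (Filter.Eventually.of_forall fun ω => by simpa using hub ω)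
  have hia : Integrable a P := hint hma hba
  have hib : Integrable b P := hint hmb hbb
  have hic : Integrable c P := hint hmc hbc
  have hid : Integrable d P := hint hmd hbd
  have hX : Integrable X P := aux_integrable_of_bounded hXm.aestronglyMeasurable hX1
  have hY : Integrable Y P := aux_integrable_of_bounded hYm.aestronglyMeasurable hY1
  have hXY : Integrable (fun ω => X ω * Y ω) P := by
    refine aux_integrable_of_bounded ((hXm.mul hYm).aestronglyMeasurable) (C := 1) fun ω => ?_
    calc ‖X ω * Y ω‖ = ‖X ω‖ * ‖Y ω‖ := norm_mul _ _
      _ ≤ 1 * 1 := mul_le_mul (hX1 ω) (hY1 ω) (norm_nonneg _) zero_le_one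
      _ = 1 := by ring
  have hac : IndepFun a c P := h.comp Complex.measurable_re Complex.measurable_re
  have had : IndepFun a d P := h.comp Complex.measurable_re Complex.measurable_im
  have hbc' : IndepFun b c P := h.comp Complex.measurable_im Complex.measurable_re
  have hbd' : IndepFun b d P := h.comp Complex.measurable_im Complex.measurable_im
  have e1 : ∫ ω, a ω * c ω ∂P = (∫ ω, a ω ∂P) * ∫ ω, c ω ∂P := hac.integral_mul_eq_mul_integral hia.1 hic.1
  have e2 : ∫ ω, a ω * d ω ∂P = (∫ ω, a ω ∂P) * ∫ ω, d ω ∂P := had.integral_mul_eq_mul_integral hia.1 hid.1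
  have e3 : ∫ ω, b ω * c ω ∂P = (∫ ω, b ω ∂P) * ∫ ω, c ω ∂P := hbc'.integral_mul_eq_mul_integral hib.1 hic.1
  have e4 : ∫ ω, b ω * d ω ∂P = (∫ ω, b ω ∂P) * ∫ ω, d ω ∂P := hbd'.integral_mul_eq_mul_integral hib.1 hid.1
  have hiac : Integrable (fun ω => a ω * c ω) P :=
    hint (hma.mul hmc) (fun ω => by rw [abs_mul]; nlinarith [abs_nonneg (a ω), abs_nonneg (c ω), hba ω, hbc ω])
  have hibd : Integrable (fun ω => b ω * d ω) P :=
    hint (hmb.mul hmd) (fun ω => by rw [abs_mul]; nlinarith [abs_nonneg (b ω), abs_nonneg (d ω), hbb ω, hbd ω])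
  have hiad : Integrable (fun ω => a ω * d ω) P :=
    hint (hma.mul hmd) (fun ω => by rw [abs_mul]; nlinarith [abs_nonneg (a ω), abs_nonneg (d ω), hba ω, hbd ω])
  have hibc : Integrable (fun ω => b ω * c ω) P :=
    hint (hmb.mul hmc) (fun ω => by rw [abs_mul]; nlinarith [abs_nonneg (b ω), abs_nonneg (c ω), hbb ω, hbc ω])
  have hreX : (∫ ω, X ω ∂P).re = ∫ ω, a ω ∂P := by
    simpa using (Complex.reCLM.integral_comp_comm hX).symm
  have himX : (∫ ω, X ω ∂P).im = ∫ ω, b ω ∂P := by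
    simpa using (Complex.imCLM.integral_comp_comm hX).symm
  have hreY : (∫ ω, Y ω ∂P).re = ∫ ω, c ω ∂P := by
    simpa using (Complex.reCLM.integral_comp_comm hY).symm
  have himY : (∫ ω, Y ω ∂P).im = ∫ ω, d ω ∂P := by
    simpa using (Complex.imCLM.integral_comp_comm hY).symm
  have hreXY : (∫ ω, X ω * Y ω ∂P).re = ∫ ω, (X ω * Y ω).re ∂P := by
    simpa using (Complex.reCLM.integral_comp_comm hXY).symm
  have himXY : (∫ ω, X ω * Y ω ∂P).im = ∫ ω, (X ω * Y ω).im ∂P := by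
    simpa using (Complex.imCLM.integral_comp_comm hXY).symm
  apply Complex.ext
  · rw [hreXY]
    have : (∫ ω, (X ω * Y ω).re ∂P) = (∫ ω, a ω * c ω ∂P) - ∫ ω, b ω * d ω ∂P := by
      rw [← integral_sub hiac hibd]
      exact integral_congr_ae (Filter.Eventually.of_forall fun ω => Complex.mul_re _ _)
    rw [this, e1, e4, Complex.mul_re, hreX, himX, hreY, himY]
  · rw [himXY]
    have : (∫ ω, (X ω * Y ω).im ∂P) = (∫ ω, a ω * d ω ∂P) + ∫ ω, b ω * c ω ∂P := by
      rw [← integral_add hiad hibc]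
      exact integral_congr_ae (Filter.Eventually.of_forall fun ω => Complex.mul_im _ _)
    rw [this, e2, e3, Complex.mul_im, hreX, himX, hreY, himY]


lemma aux_indep_integral_prod {ι : Type*} {F : ι → Ω → ℂ}
    (h : iIndepFun F P) (hm : ∀ i, Measurable (F i))
    (h1 : ∀ i ω, ‖F i ω‖ ≤ 1) (s : Finset ι) :
    ∫ ω, ∏ i ∈ s, F i ω ∂P = ∏ i ∈ s, ∫ ω, F i ω ∂P := by
  classical
  induction s using Finset.induction_on with
  | empty => simp
  | insert i s hi ih =>
    rw [Finset.prod_insert hi]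
    have hprod : IndepFun (∏ j ∈ s, F j) (F i) P :=
      h.indepFun_finset_prod_of_notMem hm hi
    have hfn : (∏ j ∈ s, F j) = fun ω => ∏ j ∈ s, F j ω := by
      funext ω; simp
    rw [hfn] at hprod
    have hmp : Measurable (fun ω => ∏ j ∈ s, F j ω) := by
      exact Finset.measurable_prod s fun j _ => hm j
    have hbp : ∀ ω, ‖∏ j ∈ s, F j ω‖ ≤ 1 := by
      intro ω
      rw [norm_prod]
      exact Finset.prod_le_one (fun j _ => norm_nonneg _) (fun j _ => h1 j ω)
    have := aux_indep_integral_mul hprod.symm (hm i) hmp (h1 i) hbp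
    simp_rw [Finset.prod_insert hi]
    rw [this, ih]

lemma aux_riemann_sum_tendsto {t : ℝ} (ht : 0 < t) {g : ℝ → ℂ}
    (hg : ContinuousOn g (Set.Icc 0 t)) :
    Tendsto (fun n : ℕ => ∑ k ∈ Finset.range (n + 1),
        ((t / (n + 1) : ℝ) : ℂ) * g ((k : ℝ) * (t / (n + 1)))) atTop
      (𝓝 (∫ s in (0:ℝ)..t, g s)) := by
  have huc : UniformContinuousOn g (Set.Icc 0 t) :=
    isCompact_Icc.uniformContinuousOn_of_continuous hg
  rw [Metric.tendsto_atTop]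
  intro ε hε
  have hε' : 0 < ε / (t + 1) := by positivity
  obtain ⟨δ, hδ, hδ'⟩ := (Metric.uniformContinuousOn_iff).1 huc (ε / (t + 1)) hε'
  obtain ⟨N, hN⟩ := exists_nat_gt (t / δ)
  refine ⟨N, fun n hn => ?_⟩
  set Δ : ℝ := t / (n + 1) with hΔdef
  have hnpos : (0:ℝ) < (n:ℝ) + 1 := by positivity
  have hΔpos : 0 < Δ := by positivity
  have hΔδ : Δ < δ := by
    rw [hΔdef, div_lt_iff₀ hnpos]
    have h1 : t / δ < (n:ℝ) + 1 := lt_of_lt_of_le hN (by exact_mod_cast Nat.le_succ_of_le hn)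
    calc t = (t / δ) * δ := by field_simp
      _ < ((n:ℝ) + 1) * δ := by exact mul_lt_mul_of_pos_right h1 hδ
      _ = δ * ((n:ℝ) + 1) := by ring
  set a : ℕ → ℝ := fun k => (k : ℝ) * Δ with hadef
  have hamono : ∀ k : ℕ, a k ≤ a (k + 1) := by
    intro k
    simp only [hadef]
    push_cast
    nlinarith [hΔpos.le]
  have ha0 : a 0 = 0 := by simp [hadef]
  have han : a (n + 1) = t := by
    simp only [hadef, hΔdef]; push_cast; field_simp
  have hmem : ∀ k : ℕ, k ≤ n + 1 → a k ∈ Set.Icc (0:ℝ) t := by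
    intro k hk
    constructor
    · positivity
    · rw [hadef]
      calc (k:ℝ) * Δ ≤ ((n:ℝ) + 1) * Δ := by
            apply mul_le_mul_of_nonneg_right _ hΔpos.le
            exact_mod_cast hk
        _ = t := by rw [hΔdef]; field_simp
  have hsub : ∀ k : ℕ, k < n + 1 → Set.uIcc (a k) (a (k + 1)) ⊆ Set.Icc (0:ℝ) t := by
    intro k hk
    rw [Set.uIcc_of_le (hamono k)]
    intro u hu
    exact ⟨le_trans (hmem k hk.le).1 hu.1, le_trans hu.2 (hmem (k+1) hk).2⟩
  have hint : ∀ k < n + 1, IntervalIntegrable g volume (a k) (a (k + 1)) := by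
    intro k hk
    exact (hg.mono (hsub k hk)).intervalIntegrable
  have hsplit : ∫ s in (0:ℝ)..t, g s
      = ∑ k ∈ Finset.range (n + 1), ∫ s in (a k)..(a (k + 1)), g s := by
    rw [intervalIntegral.sum_integral_adjacent_intervals hint, ha0, han]
  rw [dist_eq_norm]
  have hdiff : (∑ k ∈ Finset.range (n + 1), ((Δ : ℝ) : ℂ) * g ((k : ℝ) * Δ))
        - ∫ s in (0:ℝ)..t, g s
      = ∑ k ∈ Finset.range (n + 1),
          ((((Δ : ℝ) : ℂ) * g (a k)) - ∫ s in (a k)..(a (k + 1)), g s) := by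
    rw [hsplit, ← Finset.sum_sub_distrib]
  rw [hdiff]
  have hterm : ∀ k ∈ Finset.range (n + 1),
      ‖(((Δ : ℝ) : ℂ) * g (a k)) - ∫ s in (a k)..(a (k + 1)), g s‖ ≤ (ε / (t + 1)) * Δ := by
    intro k hk
    rw [Finset.mem_range] at hk
    have hconst : (((Δ : ℝ) : ℂ) * g (a k)) = ∫ _ in (a k)..(a (k + 1)), g (a k) := by
      rw [intervalIntegral.integral_const]
      have : a (k + 1) - a k = Δ := by rw [hadef]; push_cast; ring
      rw [this, Complex.real_smul]
    rw [hconst, ← intervalIntegral.integral_sub (by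
        exact intervalIntegrable_const) (hint k hk)]
    have hle : a k ≤ a (k + 1) := hamono k
    have := intervalIntegral.norm_integral_le_of_norm_le_const
      (a := a k) (b := a (k+1)) (C := ε / (t + 1))
      (f := fun u => g (a k) - g u) ?_
    · calc ‖∫ u in (a k)..(a (k+1)), (g (a k) - g u)‖ ≤ (ε / (t+1)) * |a (k+1) - a k| := this
        _ = (ε / (t+1)) * Δ := by
            congr 1
            rw [abs_of_nonneg (by linarith)]
            rw [hadef]; push_cast; ring
    · intro u hu
      rw [Set.uIoc_of_le hle] at hu
      have hu1 : u ∈ Set.Icc (0:ℝ) t := by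
        constructor
        · exact le_trans (hmem k hk.le).1 hu.1.le
        · exact le_trans hu.2 (hmem (k+1) hk).2
      have hd : dist (a k) u < δ := by
        rw [Real.dist_eq, abs_of_nonpos (by linarith [hu.1])]
        have : u - a k ≤ Δ := by
          have : a (k+1) - a k = Δ := by rw [hadef]; push_cast; ring
          linarith [hu.2]
        linarith
      have := hδ' (a k) (hmem k hk.le) u hu1 hd
      rw [dist_eq_norm] at this
      exact this.le
  calc ‖∑ k ∈ Finset.range (n + 1),
        ((((Δ : ℝ) : ℂ) * g (a k)) - ∫ s in (a k)..(a (k + 1)), g s)‖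
      ≤ ∑ k ∈ Finset.range (n + 1), (ε / (t + 1)) * Δ :=
        norm_sum_le_of_le _ hterm
    _ = (n + 1) * ((ε / (t + 1)) * Δ) := by
        rw [Finset.sum_const, Finset.card_range]; push_cast; ring
    _ = ε * (t / (t + 1)) := by
        rw [hΔdef]; field_simp
    _ < ε := by
        have h1 : t / (t + 1) < 1 := by
          rw [div_lt_one (by linarith)]; linarith
        calc ε * (t / (t + 1)) < ε * 1 := by exact mul_lt_mul_of_pos_left h1 hε
          _ = ε := mul_one ε

end AuxProb

lemma aux_resolvent_strong_cont {H : Type*} [NormedAddCommGroup H] [InnerProductSpace ℝ H]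
    {a : ℝ → ℝ} {A : H →ₗ.[ℝ] H} {R : ℝ → H →L[ℝ] H}
    (hR : IsResolventFamily a A R) (hAdense : Dense (A.domain : Set H)) (x : H) :
    ContinuousOn (fun τ => R τ x) (Set.Ici 0) := by
  intro τ₀ hτ₀
  rw [Metric.continuousWithinAt_iff]
  intro ε hε
  obtain ⟨C, hC⟩ := hR.loc_bdd (τ₀ + 1) (by simp only [Set.mem_Ici] at hτ₀; linarith)
  set C' : ℝ := max C 1 with hC'def
  have hC'pos : 0 < C' := lt_of_lt_of_le one_pos (le_max_right _ _)
  obtain ⟨x', hx'dom, hx'⟩ := hAdense.exists_dist_lt x (show 0 < ε / (3 * C') by positivity)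
  have hcont := (hR.strong_cont x' hx'dom) τ₀ hτ₀
  rw [Metric.continuousWithinAt_iff] at hcont
  obtain ⟨δ, hδpos, hδ⟩ := hcont (ε / 3) (by positivity)
  refine ⟨min δ 1, by positivity, fun τ hτ hdist => ?_⟩
  simp only [Set.mem_Ici] at hτ hτ₀
  have hdist1 : dist τ τ₀ < δ := lt_of_lt_of_le hdist (min_le_left _ _)
  have hdist2 : dist τ τ₀ < 1 := lt_of_lt_of_le hdist (min_le_right _ _)
  have hτle : τ ≤ τ₀ + 1 := by
    rw [Real.dist_eq] at hdist2
    cases abs_lt.1 hdist2 with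
    | intro h1 h2 => linarith
  have hnorm : ∀ σ : ℝ, 0 ≤ σ → σ ≤ τ₀ + 1 → ‖R σ‖ ≤ C' :=
    fun σ h1 h2 => le_trans (hC σ ⟨h1, h2⟩) (le_max_left _ _)
  have hbd : ∀ σ : ℝ, 0 ≤ σ → σ ≤ τ₀ + 1 → dist (R σ x) (R σ x') < ε / 3 := by
    intro σ h1 h2
    rw [dist_eq_norm, ← map_sub]
    calc ‖R σ (x - x')‖ ≤ ‖R σ‖ * ‖x - x'‖ := (R σ).le_opNorm _
      _ ≤ C' * ‖x - x'‖ := by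
          apply mul_le_mul_of_nonneg_right (hnorm σ h1 h2) (norm_nonneg _)
      _ < C' * (ε / (3 * C')) := by
          apply mul_lt_mul_of_pos_left _ hC'pos
          rw [← dist_eq_norm]; exact hx'
      _ = ε / 3 := by field_simp
  have h2 := hδ hτ hdist1
  calc dist (R τ x) (R τ₀ x)
      ≤ dist (R τ x) (R τ x') + dist (R τ x') (R τ₀ x') + dist (R τ₀ x') (R τ₀ x) :=
        dist_triangle4 _ _ _ _
    _ < ε / 3 + ε / 3 + ε / 3 := by
        have e1 := hbd τ hτ hτle
        have e2 := hbd τ₀ hτ₀ (by linarith)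
        rw [dist_comm (R τ₀ x') (R τ₀ x)]
        exact add_lt_add (add_lt_add e1 h2) e2
    _ = ε := by ring


lemma aux_norm_exp_I (r : ℝ) : ‖Complex.exp (Complex.I * (r:ℂ))‖ = 1 := by
  rw [Complex.norm_exp]
  simp [Complex.mul_re]

def zeroPartition : PartitionSeq 0 0 where
  m _ := 0
  pt _ _ := 0
  tag _ _ := 0
  left _ := rfl
  right _ := rfl
  mono _ k hk := absurd hk (Nat.not_lt_zero k)
  tag_mem _ k hk := absurd hk (Nat.not_lt_zero k)
  mesh _ε _hε := ⟨0, fun _ _ k hk => absurd hk (Nat.not_lt_zero k)⟩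

def uniformPartition (t : ℝ) (ht : 0 < t) : PartitionSeq 0 t where
  m n := n + 1
  pt n k := (k : ℝ) * (t / (n + 1))
  tag n k := (k : ℝ) * (t / (n + 1))
  left _n := by simp
  right n := by push_cast; field_simp
  mono n k _hk := by
    have h : (0:ℝ) < t / (n+1) := by positivity
    push_cast
    nlinarith
  tag_mem n k _hk := by
    constructor
    · exact le_refl _
    · have h : (0:ℝ) < t / (n+1) := by positivity
      push_cast
      nlinarith
  mesh ε hε := by
    obtain ⟨N, hN⟩ := exists_nat_gt (t / ε)
    refine ⟨N, fun n hn k _hk => ?_⟩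
    have h1 : ((k+1:ℕ):ℝ) * (t/(n+1)) - (k:ℝ) * (t/(n+1)) = t/(n+1) := by
      push_cast; ring
    rw [h1, div_lt_iff₀ (by positivity)]
    have h2 : t / ε < (n:ℝ) + 1 := lt_of_lt_of_le hN (by exact_mod_cast Nat.le_succ_of_le hn)
    calc t = (t/ε) * ε := by field_simp
      _ < ((n:ℝ)+1) * ε := mul_lt_mul_of_pos_right h2 hε
      _ = ε * ((n:ℝ)+1) := by ring

/-- from the proof of Theorem 4 of the paper. If `φ` is the
characteristic exponent of the Lévy process `Z`, i.e.
`E[exp(i⟪w, Z(τ)⟫)] = exp(τ φ(w))` for all `τ ≥ 0`, then the characteristic functional of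
the stochastic convolution `Z_R(t) = ∫₀ᵗ R(t-τ) dZ(τ)` is
`E[exp(i⟪y, Z_R(t)⟫)] = exp(∫₀ᵗ φ(R(t-s)* y) ds)` for every `y ∈ H`. -/
theorem stochastic_convolution_characteristic_functional
    {Ω : Type*} [MeasurableSpace Ω] (P : Measure Ω) [IsProbabilityMeasure P]
    {H : Type*} [NormedAddCommGroup H] [InnerProductSpace ℝ H] [CompleteSpace H]
    [SecondCountableTopology H] [MeasurableSpace H] [BorelSpace H]
    (Z : ℝ → Ω → H) (hZ : IsLevyProcess P Z)
    (a : ℝ → ℝ) (ha : LocallyIntegrableOn a (Set.Ici 0) volume)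
    (A : H →ₗ.[ℝ] H) (hAdense : Dense (A.domain : Set H)) (hAclosed : A.IsClosed)
    (R : ℝ → H →L[ℝ] H) (hR : IsResolventFamily a A R)
    (φ : H → ℂ)
    (hφ : ∀ (v : H) (τ : ℝ), 0 ≤ τ →
      ∫ ω, Complex.exp (Complex.I * ((inner ℝ v (Z τ ω) : ℝ) : ℂ)) ∂P =
        Complex.exp ((τ : ℂ) * φ v))
    (t : ℝ) (ht : 0 ≤ t) (Y : Ω → H) (hY : IsStochConvAt P R Z t Y) :
    ∀ y : H,
      ∫ ω, Complex.exp (Complex.I * ((inner ℝ y (Y ω) : ℝ) : ℂ)) ∂P =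
        Complex.exp (∫ s in (0:ℝ)..t, φ ((ContinuousLinearMap.adjoint (R (t - s))) y)) := by
  intro y
  rcases eq_or_lt_of_le ht with rfl | htpos
  · -- case t = 0
    have h0 := tendstoInMeasure_iff_dist.1 (hY zeroPartition)
    have hnull : ∀ ε : ℝ, 0 < ε → P {ω | ε ≤ ‖Y ω‖} = 0 := by
      intro ε hε
      have h1 := h0 ε hε
      have h2 : (fun n : ℕ => P {ω | ε ≤ dist (∑ k ∈ Finset.range (zeroPartition.m n),
          R (0 - zeroPartition.tag n k)
            (Z (zeroPartition.pt n (k+1)) ω - Z (zeroPartition.pt n k) ω)) (Y ω)})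
          = fun _ : ℕ => P {ω | ε ≤ ‖Y ω‖} := by
        funext n
        congr 1
        ext ω
        simp [zeroPartition]
      rw [h2] at h1
      exact tendsto_nhds_unique tendsto_const_nhds h1
    have hae : ∀ᵐ ω ∂P, Y ω = 0 := by
      rw [ae_iff]
      have hsub : {ω | ¬ Y ω = 0} ⊆ ⋃ n : ℕ, {ω | 1/((n:ℝ)+1) ≤ ‖Y ω‖} := by
        intro ω hω
        simp only [Set.mem_setOf_eq] at hω
        have hpos : 0 < ‖Y ω‖ := norm_pos_iff.2 hω
        obtain ⟨n, hn⟩ := exists_nat_one_div_lt hpos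
        exact Set.mem_iUnion.2 ⟨n, le_of_lt hn⟩
      exact measure_mono_null hsub (measure_iUnion_null fun n => hnull _ (by positivity))
    have hlhs : ∫ ω, Complex.exp (Complex.I * ((inner ℝ y (Y ω) : ℝ) : ℂ)) ∂P = 1 := by
      rw [show (1 : ℂ) = ∫ _ω, (1:ℂ) ∂P by simp]
      apply integral_congr_ae
      filter_upwards [hae] with ω hω
      simp [hω]
    rw [hlhs, intervalIntegral.integral_same, Complex.exp_zero]
  · -- case 0 < t
    set v : ℝ → H := fun s => ContinuousLinearMap.adjoint (R (t - s)) y with hv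
    have hexp_cont : Continuous (fun r : ℝ => Complex.exp (Complex.I * (r : ℂ))) :=
      Complex.continuous_exp.comp (continuous_const.mul Complex.continuous_ofReal)
    have hexp_meas : ∀ (w : H) (τ : ℝ),
        Measurable (fun ω => Complex.exp (Complex.I * ((inner ℝ w (Z τ ω) : ℝ) : ℂ))) := by
      intro w τ
      exact (hexp_cont.measurable).comp ((innerSL ℝ w).continuous.measurable.comp (hZ.measurable τ))
    obtain ⟨K, hK1, hK⟩ : ∃ K : ℝ, 1 ≤ K ∧ ∀ s ∈ Set.Icc (0:ℝ) t, ‖v s‖ ≤ K := by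
      obtain ⟨C, hC⟩ := hR.loc_bdd t htpos
      refine ⟨max C 1 * ‖y‖ + 1, ?_, ?_⟩
      · nlinarith [norm_nonneg y, mul_nonneg (le_trans zero_le_one (le_max_right C 1)) (norm_nonneg y)]
      · intro s hs
        have hts : t - s ∈ Set.Icc (0:ℝ) t := ⟨by linarith [hs.2], by linarith [hs.1]⟩
        have hadj : ‖ContinuousLinearMap.adjoint (R (t - s))‖ = ‖R (t - s)‖ :=
          ContinuousLinearMap.adjoint.norm_map _
        calc ‖v s‖ ≤ ‖ContinuousLinearMap.adjoint (R (t - s))‖ * ‖y‖ :=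
              (ContinuousLinearMap.adjoint (R (t - s))).le_opNorm y
          _ = ‖R (t - s)‖ * ‖y‖ := by rw [hadj]
          _ ≤ max C 1 * ‖y‖ := by
              apply mul_le_mul_of_nonneg_right _ (norm_nonneg y)
              exact le_trans (hC _ hts) (le_max_left _ _)
          _ ≤ max C 1 * ‖y‖ + 1 := by linarith
    have hKpos : 0 < K := lt_of_lt_of_le one_pos hK1
    have hinner_cont : ∀ x : H, ContinuousOn (fun s => (inner ℝ (v s) x : ℝ)) (Set.Icc 0 t) := by
      intro x
      have heq : ∀ s : ℝ, (inner ℝ (v s) x : ℝ) = (inner ℝ y (R (t - s) x) : ℝ) := fun s =>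
        ContinuousLinearMap.adjoint_inner_left _ _ _
      simp only [heq]
      have hmap : Set.MapsTo (fun s : ℝ => t - s) (Set.Icc 0 t) (Set.Ici 0) := by
        intro s hs
        simp only [Set.mem_Ici]
        linarith [hs.2]
      have h1 : ContinuousOn (fun s : ℝ => R (t - s) x) (Set.Icc 0 t) :=
        (aux_resolvent_strong_cont hR hAdense x).comp
          ((continuous_const.sub continuous_id).continuousOn) hmap
      exact continuousOn_const.inner h1
    have hψcont : ∀ τ : ℝ, ContinuousOn
        (fun s => ∫ ω, Complex.exp (Complex.I * ((inner ℝ (v s) (Z τ ω) : ℝ) : ℂ)) ∂P)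
        (Set.Icc 0 t) := by
      intro τ
      apply continuousOn_of_dominated (bound := fun _ => 1)
      · intro s _hs
        exact (hexp_meas (v s) τ).aestronglyMeasurable
      · intro s _hs
        exact Filter.Eventually.of_forall fun ω => le_of_eq (aux_norm_exp_I _)
      · exact integrable_const 1
      · exact Filter.Eventually.of_forall fun ω =>
          hexp_cont.comp_continuousOn (hinner_cont (Z τ ω))
    have hψφ : ∀ τ : ℝ, 0 ≤ τ → ∀ s : ℝ,
        (∫ ω, Complex.exp (Complex.I * ((inner ℝ (v s) (Z τ ω) : ℝ) : ℂ)) ∂P)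
          = Complex.exp ((τ:ℂ) * φ (v s)) := fun τ hτ s => hφ (v s) τ hτ
    obtain ⟨τ₀, hτ₀pos, hsmall⟩ : ∃ τ₀ : ℝ, 0 < τ₀ ∧ ∀ τ ∈ Set.Icc (0:ℝ) τ₀,
        ∀ s ∈ Set.Icc (0:ℝ) t, ‖Complex.exp ((τ:ℂ) * φ (v s)) - 1‖ ≤ 1/2 := by
      set δ : ℝ := 1/(8*K) with hδdef
      have hδpos : 0 < δ := by positivity
      have hKδeq : K * δ = 1/8 := by
        rw [hδdef]
        field_simp
      have htend := hZ.contInProb 0 le_rfl δ hδpos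
      have hseteq : ∀ τ : ℝ, P {ω | δ < ‖Z τ ω - Z 0 ω‖} = P {ω | δ < ‖Z τ ω‖} := by
        intro τ
        apply measure_congr
        filter_upwards [hZ.init] with ω h0
        show (δ < ‖Z τ ω - Z 0 ω‖) = (δ < ‖Z τ ω‖)
        rw [h0, sub_zero]
      simp only [hseteq] at htend
      have hofr : (0:ENNReal) < ENNReal.ofReal (1/8) := ENNReal.ofReal_pos.2 (by norm_num)
      have hlt : ∀ᶠ τ in nhdsWithin 0 (Set.Ici 0),
          P {ω | δ < ‖Z τ ω‖} < ENNReal.ofReal (1/8) :=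
        htend.eventually (gt_mem_nhds hofr)
      rw [eventually_nhdsWithin_iff, Metric.eventually_nhds_iff] at hlt
      obtain ⟨r, hr, hball⟩ := hlt
      refine ⟨min (r/2) 1, by positivity, ?_⟩
      intro τ hτ s hs
      have hτ0 : 0 ≤ τ := hτ.1
      rw [← hψφ τ hτ0 s]
      set f : Ω → ℂ := fun ω => Complex.exp (Complex.I * ((inner ℝ (v s) (Z τ ω) : ℝ):ℂ)) with hf
      have hfm : Measurable f := hexp_meas (v s) τ
      have hfint : Integrable f P := aux_integrable_of_bounded hfm.aestronglyMeasurable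
        (C := 1) (fun ω => le_of_eq (aux_norm_exp_I _))
      have hPS : (P {ω | δ < ‖Z τ ω‖}).toReal ≤ 1/8 := by
        have hτr : dist τ (0:ℝ) < r := by
          rw [Real.dist_eq, sub_zero, abs_of_nonneg hτ0]
          have h1 : τ ≤ r/2 := le_trans hτ.2 (min_le_left _ _)
          linarith
        have h2 := hball hτr (Set.mem_Ici.2 hτ0)
        exact ENNReal.toReal_le_of_le_ofReal (by norm_num) h2.le
      have hSmeasset : MeasurableSet {ω | δ < ‖Z τ ω‖} :=
        measurableSet_lt measurable_const (hZ.measurable τ).norm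
      have hbound : ∀ ω, ‖f ω - 1‖ ≤
          Set.indicator {ω | δ < ‖Z τ ω‖} (fun _ => (2:ℝ)) ω + K * δ := by
        intro ω
        by_cases hω : δ < ‖Z τ ω‖
        · rw [Set.indicator_of_mem (show ω ∈ {ω | δ < ‖Z τ ω‖} from hω)]
          have h2 : ‖f ω - 1‖ ≤ 2 := by
            calc ‖f ω - 1‖ ≤ ‖f ω‖ + ‖(1:ℂ)‖ := norm_sub_le _ _
              _ = 2 := by rw [hf]; rw [aux_norm_exp_I, norm_one]; norm_num
          nlinarith [mul_nonneg (le_of_lt hKpos) hδpos.le]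
        · rw [Set.indicator_of_notMem (show ω ∉ {ω | δ < ‖Z τ ω‖} from hω)]
          push_neg at hω
          have h3 : ‖f ω - 1‖ ≤ |(inner ℝ (v s) (Z τ ω) : ℝ)| := aux_norm_exp_I_mul_sub_one _
          have h4 : |(inner ℝ (v s) (Z τ ω) : ℝ)| ≤ ‖v s‖ * ‖Z τ ω‖ := abs_real_inner_le_norm _ _
          have h5 : ‖v s‖ * ‖Z τ ω‖ ≤ K * δ :=
            mul_le_mul (hK s hs) hω (norm_nonneg _) hKpos.le
          rw [zero_add]
          linarith
      have hstep : (∫ ω, f ω ∂P) - 1 = ∫ ω, (f ω - 1) ∂P := by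
        rw [integral_sub hfint (integrable_const 1), integral_const]
        simp
      calc ‖(∫ ω, f ω ∂P) - 1‖ = ‖∫ ω, (f ω - 1) ∂P‖ := by rw [hstep]
        _ ≤ ∫ ω, ‖f ω - 1‖ ∂P := norm_integral_le_integral_norm _
        _ ≤ ∫ ω, (Set.indicator {ω | δ < ‖Z τ ω‖} (fun _ => (2:ℝ)) ω + K * δ) ∂P := by
            refine integral_mono (hfint.sub (integrable_const 1)).norm ?_ hbound
            exact ((integrable_const (2:ℝ)).indicator hSmeasset).add (integrable_const _)
        _ = (P {ω | δ < ‖Z τ ω‖}).toReal * 2 + K * δ := by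
            rw [integral_add ((integrable_const (2:ℝ)).indicator hSmeasset) (integrable_const _),
              integral_indicator_const _ hSmeasset, integral_const]
            simp [measure_univ, measureReal_def]
        _ ≤ 1/2 := by nlinarith
    obtain ⟨M, hM0, hM⟩ : ∃ M : ℝ, 0 ≤ M ∧ ∀ s ∈ Set.Icc (0:ℝ) t,
        ‖φ (v s)‖ ≤ M := by
      have hlog2 : (0:ℝ) ≤ Real.log 2 := Real.log_nonneg (by norm_num)
      refine ⟨Real.log 2 / τ₀ + Real.pi / (2 * τ₀), by positivity, ?_⟩
      intro s hs
      set z : ℂ := φ (v s) with hz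
      have h0 : ∀ τ ∈ Set.Icc (0:ℝ) τ₀, ‖Complex.exp ((τ:ℂ) * z) - 1‖ ≤ 1/2 :=
        fun τ hτ => hsmall τ hτ s hs
      have hre_exp : ∀ τ : ℝ, ‖Complex.exp ((τ:ℂ) * z)‖ = Real.exp (τ * z.re) := by
        intro τ
        rw [Complex.norm_exp]
        congr 1
        simp [Complex.mul_re]
      have habs : |‖Complex.exp ((τ₀:ℂ) * z)‖ - 1| ≤ 1/2 := by
        have h1 := h0 τ₀ ⟨hτ₀pos.le, le_refl _⟩
        have h2 := abs_norm_sub_norm_le (Complex.exp ((τ₀:ℂ) * z)) 1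
        rw [norm_one] at h2
        exact le_trans (le_of_eq rfl) (le_trans h2 h1)
      have h3 : Real.exp (τ₀ * z.re) ≤ 2 := by
        rw [hre_exp] at habs
        rcases abs_le.1 habs with ⟨_, hb⟩
        linarith
      have h4 : (1:ℝ)/2 ≤ Real.exp (τ₀ * z.re) := by
        rw [hre_exp] at habs
        rcases abs_le.1 habs with ⟨ha, _⟩
        linarith
      have hre1 : τ₀ * z.re ≤ Real.log 2 := by
        have := Real.log_le_log (Real.exp_pos _) h3
        rwa [Real.log_exp] at this
      have hre2 : -Real.log 2 ≤ τ₀ * z.re := by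
        have := Real.log_le_log (by norm_num : (0:ℝ) < 1/2) h4
        rw [Real.log_exp] at this
        have hlh : Real.log (1/2) = -Real.log 2 := by
          rw [one_div, Real.log_inv]
        linarith [hlh ▸ this]
      have hre : |z.re| ≤ Real.log 2 / τ₀ := by
        have hurr : z.re ≤ Real.log 2 / τ₀ := by
          rw [le_div_iff₀ hτ₀pos]; nlinarith
        have hllr : -z.re ≤ Real.log 2 / τ₀ := by
          rw [le_div_iff₀ hτ₀pos]; nlinarith
        exact abs_le.2 ⟨by linarith, hurr⟩
      have hcos : ∀ τ ∈ Set.Icc (0:ℝ) τ₀, 0 < Real.cos (τ * z.im) := by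
        intro τ hτ
        have h5 := h0 τ hτ
        have h6 : (1:ℝ)/2 ≤ (Complex.exp ((τ:ℂ) * z)).re := by
          have h7 : |(Complex.exp ((τ:ℂ) * z) - 1).re| ≤ 1/2 := by
            refine le_trans (Complex.abs_re_le_norm _) ?_
            exact h5
          have h8 : (Complex.exp ((τ:ℂ) * z) - 1).re = (Complex.exp ((τ:ℂ) * z)).re - 1 := by
            simp
          rw [h8] at h7
          rcases abs_le.1 h7 with ⟨ha, _⟩
          linarith
        have h9 : (Complex.exp ((τ:ℂ) * z)).re = Real.exp (τ * z.re) * Real.cos (τ * z.im) := by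
          rw [Complex.exp_re]
          simp [Complex.mul_re, Complex.mul_im]
        rw [h9] at h6
        nlinarith [Real.exp_pos (τ * z.re), Real.exp_le_exp.2 (le_refl (τ * z.re))]
      have him : |z.im| ≤ Real.pi / (2 * τ₀) := by
        by_contra hcon
        push_neg at hcon
        have himpos : 0 < |z.im| := lt_trans (by positivity) hcon
        set τs : ℝ := (Real.pi / 2) / |z.im| with hτs
        have hτs_pos : 0 < τs := by positivity
        have hτs_le : τs ≤ τ₀ := by
          rw [hτs, div_le_iff₀ himpos]
          have h10 : Real.pi / (2 * τ₀) * τ₀ < |z.im| * τ₀ :=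
            mul_lt_mul_of_pos_right hcon hτ₀pos
          have h11 : Real.pi / (2 * τ₀) * τ₀ = Real.pi / 2 := by
            field_simp
          nlinarith
        have hc := hcos τs ⟨hτs_pos.le, hτs_le⟩
        have himne : z.im ≠ 0 := by
          intro hzero
          rw [hzero, abs_zero] at himpos
          exact lt_irrefl 0 himpos
        have hcase : τs * z.im = Real.pi/2 ∨ τs * z.im = -(Real.pi/2) := by
          rcases abs_cases z.im with ⟨he, _⟩ | ⟨he, _⟩
          · left
            rw [hτs, he]
            field_simp
          · right
            rw [hτs, he]
            field_simp
        rcases hcase with h | h <;> rw [h] at hc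
        · rw [Real.cos_pi_div_two] at hc
          exact lt_irrefl 0 hc
        · rw [Real.cos_neg, Real.cos_pi_div_two] at hc
          exact lt_irrefl 0 hc
      calc ‖z‖ ≤ |z.re| + |z.im| := Complex.norm_le_abs_re_add_abs_im z
        _ ≤ Real.log 2 / τ₀ + Real.pi / (2 * τ₀) := add_le_add hre him
    have hgcont : ContinuousOn (fun s => φ (v s)) (Set.Icc 0 t) := by
      set F : ℕ → ℝ → ℂ := fun n s => ((n:ℂ) + 1) *
          ((∫ ω, Complex.exp (Complex.I * ((inner ℝ (v s) (Z (1/(n+1)) ω) : ℝ) : ℂ)) ∂P) - 1)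
        with hF
      have hFcont : ∀ n : ℕ, ContinuousOn (F n) (Set.Icc 0 t) := fun n =>
        continuousOn_const.mul ((hψcont (1/(n+1))).sub continuousOn_const)
      have hFeq : ∀ n : ℕ, ∀ s : ℝ,
          F n s = ((n:ℂ) + 1) * (Complex.exp ((((1:ℝ)/(n+1) : ℝ) : ℂ) * φ (v s)) - 1) := by
        intro n s
        rw [hF]
        simp only []
        rw [hψφ (1/(n+1)) (by positivity) s]
      have hunif : TendstoUniformlyOn F (fun s => φ (v s)) atTop (Set.Icc 0 t) := by
        rw [Metric.tendstoUniformlyOn_iff]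
        intro ε hε
        obtain ⟨N, hN⟩ := exists_nat_gt (max M (M^2/ε))
        filter_upwards [eventually_ge_atTop N] with n hn
        intro s hs
        have hnn : (0:ℝ) < (n:ℝ) + 1 := by positivity
        have hMn : M ≤ (n:ℝ) + 1 := by
          have := le_trans (le_max_left M (M^2/ε)) hN.le
          have h2 : (N:ℝ) ≤ (n:ℝ) := by exact_mod_cast hn
          linarith
        have hM2n : M^2 / ((n:ℝ)+1) < ε := by
          have h1 : M^2/ε < (N:ℝ) := lt_of_le_of_lt (le_max_right _ _) hN
          have h2 : (N:ℝ) ≤ (n:ℝ) := by exact_mod_cast hn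
          rw [div_lt_iff₀ hε] at h1
          rw [div_lt_iff₀ hnn]
          nlinarith
        rw [dist_eq_norm, hFeq n s]
        set z : ℂ := φ (v s) with hz
        set w : ℂ := (((1:ℝ)/(n+1) : ℝ) : ℂ) * z with hw
        have hnz : ((n:ℂ) + 1) ≠ 0 := by
          have h0 : (((n+1 : ℕ)) : ℂ) ≠ 0 := Nat.cast_ne_zero.2 (Nat.succ_ne_zero n)
          push_cast at h0
          exact h0
        have hnw : ((n:ℂ) + 1) * w = z := by
          rw [hw]
          push_cast
          field_simp
        have hwabs : ‖w‖ ≤ M / ((n:ℝ)+1) := by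
          rw [hw, norm_mul]
          have h1 : ‖((((1:ℝ)/(n+1) : ℝ)) : ℂ)‖ = 1/((n:ℝ)+1) := by
            rw [Complex.norm_real, Real.norm_eq_abs, abs_of_pos (by positivity)]
          rw [h1]
          have h2 : ‖z‖ ≤ M := hM s hs
          calc 1/((n:ℝ)+1) * ‖z‖ ≤ 1/((n:ℝ)+1) * M :=
                mul_le_mul_of_nonneg_left h2 (by positivity)
            _ = M / ((n:ℝ)+1) := by ring
        have hwabs1 : ‖w‖ ≤ 1 := by
          refine le_trans hwabs ?_
          rw [div_le_one hnn]
          exact hMn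
        have hkey : z - ((n:ℂ) + 1) * (Complex.exp w - 1)
            = -(((n:ℂ) + 1) * (Complex.exp w - 1 - w)) := by
          rw [← hnw]
          ring
        rw [hkey, norm_neg, norm_mul]
        have h3 : ‖((n:ℂ) + 1)‖ = (n:ℝ) + 1 := by
          rw [show ((n:ℂ) + 1) = (((n:ℝ) + 1 : ℝ) : ℂ) by push_cast; ring]
          rw [Complex.norm_real, Real.norm_eq_abs, abs_of_pos hnn]
        rw [h3]
        calc ((n:ℝ) + 1) * ‖Complex.exp w - 1 - w‖
            ≤ ((n:ℝ) + 1) * (‖w‖)^2 := by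
              apply mul_le_mul_of_nonneg_left _ hnn.le
              exact Complex.norm_exp_sub_one_sub_id_le hwabs1
          _ ≤ ((n:ℝ) + 1) * (M / ((n:ℝ)+1))^2 := by
              apply mul_le_mul_of_nonneg_left _ hnn.le
              exact pow_le_pow_left₀ (norm_nonneg w) hwabs 2
          _ = M^2 / ((n:ℝ)+1) := by field_simp
          _ < ε := hM2n
      exact hunif.continuousOn (Filter.Frequently.of_forall hFcont)
    have hconv : TendstoInMeasure P (fun n ω => ∑ k ∈ Finset.range (n+1),
        R (t - (k:ℝ)*(t/(n+1)))
          (Z (((k+1:ℕ):ℝ)*(t/(n+1))) ω - Z ((k:ℝ)*(t/(n+1))) ω)) atTop Y :=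
      hY (uniformPartition t htpos)
    set S : ℕ → Ω → H := fun n ω => ∑ k ∈ Finset.range (n+1),
        R (t - (k:ℝ)*(t/(n+1)))
          (Z (((k+1:ℕ):ℝ)*(t/(n+1))) ω - Z ((k:ℝ)*(t/(n+1))) ω) with hS
    have hSmeas : ∀ n, Measurable (S n) := by
      intro n
      apply Finset.measurable_sum
      intro k _
      exact (R _).continuous.measurable.comp
        ((hZ.measurable _).sub (hZ.measurable _))
    have hA : ∀ n : ℕ, ∫ ω, Complex.exp (Complex.I * ((inner ℝ y (S n ω) : ℝ) : ℂ)) ∂P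
        = Complex.exp (∑ k ∈ Finset.range (n+1),
            ((t/(n+1) : ℝ) : ℂ) * φ (v ((k:ℝ) * (t/(n+1))))) := by
      intro n
      set Δ : ℝ := t/(n+1) with hΔ
      have hΔpos : 0 < Δ := by rw [hΔ]; positivity
      have hSn : ∀ ω, S n ω = ∑ k ∈ Finset.range (n+1),
          R (t - (k:ℝ)*Δ) (Z (((k+1:ℕ):ℝ)*Δ) ω - Z ((k:ℝ)*Δ) ω) := by
        intro ω
        simp only [hS, hΔ]
      set tv : Fin (n+2) → ℝ := fun j => (j:ℝ) * Δ with htv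
      have htv0 : 0 ≤ tv 0 := by simp [htv]
      have htvmono : Monotone tv := by
        intro i j hij
        simp only [htv]
        apply mul_le_mul_of_nonneg_right _ hΔpos.le
        exact_mod_cast hij
      set X : Fin (n+1) → Ω → H := fun i ω => Z (tv i.succ) ω - Z (tv i.castSucc) ω with hX
      have hXm : ∀ i, Measurable (X i) := fun i => (hZ.measurable _).sub (hZ.measurable _)
      have hXind : iIndepFun X P := hZ.indep (n+1) tv htv0 htvmono
      set gm : Fin (n+1) → H → ℂ := fun i x =>
        Complex.exp (Complex.I * ((inner ℝ (v (((i:ℕ):ℝ) * Δ)) x : ℝ):ℂ)) with hgm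
      have hgmm : ∀ i, Measurable (gm i) := fun i =>
        hexp_cont.measurable.comp (innerSL ℝ _).continuous.measurable
      have hGind : iIndepFun (fun i => gm i ∘ X i) P :=
        hXind.comp gm hgmm
      have htvsucc : ∀ i : Fin (n+1), tv i.succ = tv i.castSucc + Δ := by
        intro i
        simp only [htv, Fin.val_succ, Fin.coe_castSucc]
        push_cast
        ring
      have htvcast : ∀ i : Fin (n+1), tv i.castSucc = ((i:ℕ):ℝ) * Δ := by
        intro i
        simp only [htv, Fin.coe_castSucc]
      have hsum : ∀ ω, (inner ℝ y (S n ω) : ℝ)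
          = ∑ i : Fin (n+1), (inner ℝ (v (((i:ℕ):ℝ) * Δ)) (X i ω) : ℝ) := by
        intro ω
        rw [hSn ω]
        rw [← Fin.sum_univ_eq_sum_range
          (fun k => R (t - (k:ℝ)*Δ) (Z (((k+1:ℕ):ℝ)*Δ) ω - Z ((k:ℝ)*Δ) ω)) (n+1)]
        rw [inner_sum]
        refine Finset.sum_congr rfl fun i _ => ?_
        simp only [hX]
        have h1 : Z (tv i.succ) ω - Z (tv i.castSucc) ω
            = Z ((((i:ℕ)+1:ℕ):ℝ)*Δ) ω - Z (((i:ℕ):ℝ)*Δ) ω := by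
          rw [htvsucc i, htvcast i]
          congr 2
          push_cast
          ring
        rw [h1]
        exact (ContinuousLinearMap.adjoint_inner_left _ _ _).symm
      have hfactor : ∀ i : Fin (n+1), ∫ ω, gm i (X i ω) ∂P
          = Complex.exp ((Δ:ℂ) * φ (v (((i:ℕ):ℝ) * Δ))) := by
        intro i
        have ha0 : 0 ≤ tv i.castSucc := by
          rw [htvcast i]
          positivity
        have hTm : Measurable (fun ω => Z (tv i.castSucc + Δ) ω - Z (tv i.castSucc) ω) :=
          (hZ.measurable _).sub (hZ.measurable _)
        have hmap := hZ.stationary Δ (tv i.castSucc) hΔpos.le ha0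
        calc ∫ ω, gm i (X i ω) ∂P
            = ∫ ω, gm i (Z (tv i.castSucc + Δ) ω - Z (tv i.castSucc) ω) ∂P := by
              apply integral_congr_ae
              refine Filter.Eventually.of_forall fun ω => ?_
              simp only [hX, htvsucc i]
          _ = ∫ x, gm i x ∂(Measure.map
                (fun ω => Z (tv i.castSucc + Δ) ω - Z (tv i.castSucc) ω) P) :=
              (integral_map hTm.aemeasurable (hgmm i).aestronglyMeasurable).symm
          _ = ∫ x, gm i x ∂(Measure.map (Z Δ) P) := by rw [hmap]
          _ = ∫ ω, gm i (Z Δ ω) ∂P :=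
              integral_map (hZ.measurable Δ).aemeasurable (hgmm i).aestronglyMeasurable
          _ = Complex.exp ((Δ:ℂ) * φ (v (((i:ℕ):ℝ) * Δ))) := hφ (v (((i:ℕ):ℝ) * Δ)) Δ hΔpos.le
      calc ∫ ω, Complex.exp (Complex.I * ((inner ℝ y (S n ω) : ℝ):ℂ)) ∂P
          = ∫ ω, ∏ i : Fin (n+1), (gm i ∘ X i) ω ∂P := by
            apply integral_congr_ae
            refine Filter.Eventually.of_forall fun ω => ?_
            beta_reduce
            rw [hsum ω, Complex.ofReal_sum, Finset.mul_sum, Complex.exp_sum]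
            rfl
        _ = ∏ i : Fin (n+1), ∫ ω, (gm i ∘ X i) ω ∂P :=
            aux_indep_integral_prod hGind (fun i => (hgmm i).comp (hXm i))
              (fun i ω => le_of_eq (aux_norm_exp_I _)) Finset.univ
        _ = ∏ i : Fin (n+1), Complex.exp ((Δ:ℂ) * φ (v (((i:ℕ):ℝ) * Δ))) :=
            Finset.prod_congr rfl fun i _ => hfactor i
        _ = Complex.exp (∑ i : Fin (n+1), (Δ:ℂ) * φ (v (((i:ℕ):ℝ) * Δ))) :=
            (Complex.exp_sum _ _).symm
        _ = Complex.exp (∑ k ∈ Finset.range (n+1), ((Δ:ℝ):ℂ) * φ (v ((k:ℝ) * Δ))) := by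
            congr 1
            exact Fin.sum_univ_eq_sum_range (fun k => ((Δ:ℝ):ℂ) * φ (v ((k:ℝ) * Δ))) (n+1)
    have hB : Tendsto (fun n : ℕ => ∑ k ∈ Finset.range (n+1),
        ((t/(n+1) : ℝ) : ℂ) * φ (v ((k:ℝ) * (t/(n+1))))) atTop
        (𝓝 (∫ s in (0:ℝ)..t, φ (v s))) :=
      aux_riemann_sum_tendsto (g := fun s => φ (v s)) htpos hgcont
    have hBexp : Tendsto (fun n : ℕ => ∫ ω,
        Complex.exp (Complex.I * ((inner ℝ y (S n ω) : ℝ) : ℂ)) ∂P) atTop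
        (𝓝 (Complex.exp (∫ s in (0:ℝ)..t, φ (v s)))) := by
      simp only [hA]
      exact (Complex.continuous_exp.tendsto _).comp hB
    -- subsequence converging a.e.
    obtain ⟨ns, hns_mono, hns_ae⟩ := hconv.exists_seq_tendsto_ae
    have hC : Tendsto (fun j : ℕ => ∫ ω,
        Complex.exp (Complex.I * ((inner ℝ y (S (ns j) ω) : ℝ) : ℂ)) ∂P) atTop
        (𝓝 (∫ ω, Complex.exp (Complex.I * ((inner ℝ y (Y ω) : ℝ) : ℂ)) ∂P)) := by
      apply tendsto_integral_of_dominated_convergence (bound := fun _ => 1)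
      · intro j
        exact (hexp_cont.measurable.comp
          ((innerSL ℝ y).continuous.measurable.comp (hSmeas (ns j)))).aestronglyMeasurable
      · exact integrable_const 1
      · intro j
        exact Filter.Eventually.of_forall fun ω => le_of_eq (aux_norm_exp_I _)
      · filter_upwards [hns_ae] with ω hω
        have h1 : Tendsto (fun j => (inner ℝ y (S (ns j) ω) : ℝ)) atTop (𝓝 (inner ℝ y (Y ω))) :=
          ((innerSL ℝ y).continuous.tendsto _).comp hω
        exact (hexp_cont.tendsto _).comp h1
    have hC' : Tendsto (fun j : ℕ => ∫ ω,
        Complex.exp (Complex.I * ((inner ℝ y (S (ns j) ω) : ℝ) : ℂ)) ∂P) atTop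
        (𝓝 (Complex.exp (∫ s in (0:ℝ)..t, φ (v s)))) :=
      hBexp.comp hns_mono.tendsto_atTop
    exact tendsto_nhds_unique hC hC'

end
end

section
/- Assume the resolvent family (R(t))_{t≥0} of the Volterra equation has bounded variation in operator norm on compact intervals, and Z is an H-valued Lévy process. Then for 0 ≤ a < b ≤ t the integration-by-parts formula holds P-almost surely: ∫_{(a,b]} R(t−τ) dZ(τ) = R(t−b) Z(b) − R(t−a) Z(a) − ∫_{(a,b]} dR(t−τ) Z(τ−), where the last term is the pathwise Riemann–Stieltjes integral of the left-limit path τ ↦ Z(τ−) against the operator-valued bounded-variation function τ ↦ R(t−τ) (existing as the limit of Riemann–Stieltjes sums Σ_k [R(t−s_{k+1}) − R(t−s_k)] Z(s_k*−) along partitions of (a,b] with mesh tending to 0). -/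
open MeasureTheory Filter Topology ProbabilityTheory

attribute [local instance] Classical.propDecidable

noncomputable section

/-- An operator-valued function `F` has bounded variation in operator norm on `[a,b]`. -/
def OpBoundedVariationOn {H : Type*} [NormedAddCommGroup H] [InnerProductSpace ℝ H]
    (F : ℝ → H →L[ℝ] H) (a b : ℝ) : Prop :=
  ∃ C : ℝ, ∀ (m : ℕ) (pt : ℕ → ℝ), pt 0 = a → pt m = b →
    (∀ k < m, pt k ≤ pt (k + 1)) →
    ∑ k ∈ Finset.range m, ‖F (pt (k + 1)) - F (pt k)‖ ≤ C

/-- `v` is the pathwise Riemann–Stieltjes integral `∫_(a,b] dF(τ) g(τ)`: the limit of the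
sums `∑ₖ (F(s_{k+1}) - F(sₖ)) g(tagₖ)` along every sequence of tagged partitions of
`[a,b]` with mesh tending to `0`. -/
def IsPathRSLimit {H : Type*} [NormedAddCommGroup H] [InnerProductSpace ℝ H]
    (F : ℝ → H →L[ℝ] H) (g : ℝ → H) (a b : ℝ) (v : H) : Prop :=
  ∀ π : PartitionSeq a b,
    Tendsto (fun n => ∑ k ∈ Finset.range (π.m n),
      (F (π.pt n (k + 1)) - F (π.pt n k)) (g (π.tag n k))) atTop (nhds v)

namespace Aux
set_option linter.unusedSectionVars false

lemma chain_mono {f : ℕ → ℝ} {m : ℕ} (h : ∀ k < m, f k ≤ f (k+1)) :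
    ∀ i j, i ≤ j → j ≤ m → f i ≤ f j := by
  intro i j hij hjm
  induction j with
  | zero => simp_all
  | succ j ih =>
    rcases Nat.lt_or_ge i (j+1) with hlt | hge
    · exact le_trans (ih (Nat.lt_succ_iff.mp hlt) (le_trans (Nat.le_succ j) hjm))
        (h j (Nat.lt_of_lt_of_le (Nat.lt_succ_self j) hjm))
    · have : i = j + 1 := le_antisymm hij hge
      simp [this]

variable {u b : ℝ}

lemma PS.pt_le (π : PartitionSeq u b) (n : ℕ) {i j : ℕ} (hij : i ≤ j) (hj : j ≤ π.m n) :
    π.pt n i ≤ π.pt n j :=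
  chain_mono (fun k hk => (π.mono n k hk).le) i j hij hj

lemma PS.pt_mem (π : PartitionSeq u b) (n : ℕ) {k : ℕ} (hk : k ≤ π.m n) :
    π.pt n k ∈ Set.Icc u b :=
  ⟨by have h := PS.pt_le π n (Nat.zero_le k) hk; rwa [π.left n] at h,
   by have h := PS.pt_le π n hk le_rfl; rwa [π.right n] at h⟩

lemma PS.tag_mem' (π : PartitionSeq u b) (n : ℕ) {k : ℕ} (hk : k < π.m n) :
    π.tag n k ∈ Set.Icc u b := by
  obtain ⟨h1, h2⟩ := π.tag_mem n k hk
  exact ⟨le_trans (PS.pt_mem π n hk.le).1 h1, le_trans h2 (PS.pt_mem π n hk).2⟩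

lemma PS.m_pos (π : PartitionSeq u b) (hub : u < b) (n : ℕ) : 0 < π.m n := by
  rcases Nat.eq_zero_or_pos (π.m n) with h | h
  · exfalso; have := π.right n; rw [h, π.left n] at this; exact absurd this (ne_of_lt hub)
  · exact h

/-- Telescope lemma: a sum of increments `F(pt(k+1)) - F(pt k)` over the tags satisfying an
"upward-closed at threshold z" predicate equals `F b - F w` for some `w` within `δ` of `z`. -/
lemma telescope_threshold {H : Type*} [NormedAddCommGroup H] [InnerProductSpace ℝ H]
    (F : ℝ → H →L[ℝ] H) {m : ℕ} {pt tag : ℕ → ℝ} {z δ : ℝ}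
    (hm : 0 < m) (h0 : pt 0 = u) (hlast : pt m = b)
    (hmono : ∀ k < m, pt k ≤ pt (k+1))
    (htag : ∀ k < m, tag k ∈ Set.Icc (pt k) (pt (k+1)))
    (hmesh : ∀ k < m, pt (k+1) - pt k ≤ δ)
    (Q : ℝ → Prop) (hQ1 : ∀ τ, z < τ → Q τ) (hQ2 : ∀ τ, Q τ → z ≤ τ)
    (hz : z ∈ Set.Icc u b) :
    ∃ w ∈ Set.Icc u b, |w - z| ≤ δ ∧
      (∑ k ∈ Finset.range m, if Q (tag k) then F (pt (k+1)) - F (pt k) else 0)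
        = F b - F w := by
  have hδ : 0 ≤ δ := le_trans (by linarith [hmono 0 hm]) (hmesh 0 hm)
  by_cases hex : ∃ k, k < m ∧ Q (tag k)
  · classical
    set k₀ := Nat.find hex with hk₀
    obtain ⟨hk₀m, hk₀Q⟩ := Nat.find_spec hex
    have hlow : ∀ i, i < k₀ → ¬ Q (tag i) := fun i hi h =>
      Nat.find_min hex hi ⟨lt_trans hi hk₀m, h⟩
    rw [← hk₀] at hk₀m hk₀Q
    clear_value k₀
    -- upward closedness in k
    have hup : ∀ k, k₀ ≤ k → k < m → Q (tag k) := by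
      intro k hk hkm
      induction k with
      | zero =>
        have h0' : k₀ = 0 := Nat.le_zero.mp hk
        rw [← h0']; exact hk₀Q
      | succ k ih =>
        rcases Nat.lt_or_ge k₀ (k+1) with hlt | hge
        · have hk' : k < m := lt_trans (Nat.lt_succ_self k) hkm
          have hQk : Q (tag k) := ih (Nat.lt_succ_iff.mp hlt) hk'
          have h1 : tag k ≤ tag (k+1) :=
            le_trans (htag k hk').2 (htag (k+1) hkm).1
          rcases lt_or_ge z (tag (k+1)) with h | h
          · exact hQ1 _ h
          · have e : tag (k+1) = tag k := le_antisymm (by linarith [hQ2 _ hQk]) h1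
            rw [e]; exact hQk
        · have : k₀ = k + 1 := le_antisymm hk hge
          rw [← this]; exact hk₀Q
    -- the sum telescopes from k₀ to m
    have hiff : ∀ k ∈ Finset.range m, (if Q (tag k) then F (pt (k+1)) - F (pt k) else 0)
        = (if k₀ ≤ k then F (pt (k+1)) - F (pt k) else 0) := by
      intro k hkr
      rw [Finset.mem_range] at hkr
      by_cases hc : k₀ ≤ k
      · simp [hc, hup k hc hkr]
      · simp [hc, hlow k (Nat.lt_of_not_ge hc)]
    rw [Finset.sum_congr rfl hiff]
    have hfilter : Finset.filter (fun k => k₀ ≤ k) (Finset.range m) = Finset.Ico k₀ m := by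
      ext k; simp [Finset.mem_filter, Finset.mem_range, Finset.mem_Ico, and_comm]
    rw [← Finset.sum_filter, hfilter]
    have htel : ∑ k ∈ Finset.Ico k₀ m, (F (pt (k+1)) - F (pt k)) = F (pt m) - F (pt k₀) := by
      rw [Finset.sum_Ico_eq_sub _ hk₀m.le]
      have t1 : ∀ j : ℕ, ∑ k ∈ Finset.range j, (F (pt (k+1)) - F (pt k)) = F (pt j) - F (pt 0) := by
        intro j
        induction j with
        | zero => simp
        | succ j ih => rw [Finset.sum_range_succ, ih]; abel
      rw [t1, t1]; abel
    refine ⟨pt k₀, ?_, ?_, by rw [htel, hlast]⟩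
    · constructor
      · rw [← h0]; exact chain_mono hmono 0 k₀ (Nat.zero_le _) hk₀m.le
      · rw [← hlast]; exact chain_mono hmono k₀ m hk₀m.le le_rfl
    · rw [abs_le]
      constructor
      · -- pt k₀ ≥ z - δ : z ≤ tag k₀ ≤ pt (k₀+1) ≤ pt k₀ + δ
        have := hQ2 _ hk₀Q
        have h2 := (htag k₀ hk₀m).2
        have h3 := hmesh k₀ hk₀m
        linarith
      · -- pt k₀ ≤ z + δ
        rcases Nat.eq_zero_or_pos k₀ with h0' | hpos
        · rw [h0', h0]; linarith [hz.1]
        · obtain ⟨j, rfl⟩ : ∃ j, k₀ = j + 1 := ⟨k₀ - 1, by omega⟩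
          have hjm : j < m := lt_trans (Nat.lt_succ_self j) hk₀m
          have hnQ : ¬ Q (tag j) := hlow j (by omega)
          have h4 : tag j ≤ z := by
            by_contra hcon
            exact hnQ (hQ1 _ (lt_of_not_ge hcon))
          have h5 := (htag j hjm).1
          have h6 := hmesh j hjm
          linarith
  · have hall : ∀ k ∈ Finset.range m, (if Q (tag k) then F (pt (k+1)) - F (pt k) else 0) = 0 := by
      intro k hkr
      rw [Finset.mem_range] at hkr
      have : ¬ Q (tag k) := fun h => hex ⟨k, hkr, h⟩
      simp [this]
    refine ⟨b, ⟨le_trans hz.1 hz.2, le_rfl⟩, ?_, by rw [Finset.sum_eq_zero hall]; abel⟩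
    · -- |b - z| ≤ δ
      have hj : m - 1 < m := by omega
      have hnQ : ¬ Q (tag (m-1)) := fun h => hex ⟨m-1, hj, h⟩
      have h4 : tag (m-1) ≤ z := by
        by_contra hcon
        exact hnQ (hQ1 _ (lt_of_not_ge hcon))
      have h5 := (htag (m-1) hj).1
      have h6 := hmesh (m-1) hj
      have h7 : pt (m-1) + δ ≥ pt ((m-1)+1) := by linarith
      have h8 : (m-1)+1 = m := by omega
      rw [h8] at h7
      rw [abs_le]
      constructor
      · linarith [hz.2]
      · rw [hlast] at h7; linarith
  

variable {H : Type*} [NormedAddCommGroup H] [InnerProductSpace ℝ H]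

lemma tendsto_apply_of_tendsto {G : ℕ → H →L[ℝ] H} {G₀ : H →L[ℝ] H} (c : H)
    (h : Filter.Tendsto G Filter.atTop (nhds G₀)) :
    Filter.Tendsto (fun n => G n c) Filter.atTop (nhds (G₀ c)) :=
  ((ContinuousLinearMap.apply ℝ H c).continuous.tendsto _).comp h

/-- The threshold indicator operator sums tend to `F b - F z`. -/
lemma tendsto_threshold_sum (F : ℝ → H →L[ℝ] H)
    (hFcont : ContinuousOn F (Set.Icc u b)) (hub : u < b)
    (Q : ℝ → Prop) {z : ℝ} (hz : z ∈ Set.Icc u b)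
    (hQ1 : ∀ τ, z < τ → Q τ) (hQ2 : ∀ τ, Q τ → z ≤ τ)
    (π : PartitionSeq u b) :
    Tendsto (fun n => ∑ k ∈ Finset.range (π.m n),
        if Q (π.tag n k) then F (π.pt n (k+1)) - F (π.pt n k) else 0)
      atTop (𝓝 (F b - F z)) := by
  rw [Metric.tendsto_atTop]
  intro ε hε
  obtain ⟨δ, hδ, hδ'⟩ := Metric.continuousWithinAt_iff.mp (hFcont z hz) ε hε
  obtain ⟨N, hN⟩ := π.mesh (δ/2) (by linarith)
  refine ⟨N, fun n hn => ?_⟩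
  obtain ⟨w, hw, hwz, hsum⟩ := telescope_threshold F (PS.m_pos π hub n)
    (π.left n) (π.right n) (fun k hk => (π.mono n k hk).le) (π.tag_mem n)
    (fun k hk => (hN n hn k hk).le) Q hQ1 hQ2 hz
  rw [hsum]
  have : dist (F b - F w) (F b - F z) = dist (F w) (F z) := by
    rw [dist_eq_norm, dist_eq_norm]
    have e : (F b - F w) - (F b - F z) = -(F w - F z) := by abel
    rw [e, norm_neg]
  rw [this]
  exact hδ' hw (by rw [Real.dist_eq]; linarith [abs_le.mp hwz])

/-- Limit of the partition sums against the indicator of an open interval. -/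
lemma tendsto_interval_indicator (F : ℝ → H →L[ℝ] H)
    (hFcont : ContinuousOn F (Set.Icc u b)) (hub : u < b)
    {x y : ℝ} (hx : u ≤ x) (hxy : x < y) (hyb : y ≤ b) (c : H)
    (π : PartitionSeq u b) :
    Tendsto (fun n => ∑ k ∈ Finset.range (π.m n),
        (F (π.pt n (k+1)) - F (π.pt n k)) (if π.tag n k ∈ Set.Ioo x y then c else 0))
      atTop (𝓝 ((F y - F x) c)) := by
  have key : ∀ n, (∑ k ∈ Finset.range (π.m n),
      (F (π.pt n (k+1)) - F (π.pt n k)) (if π.tag n k ∈ Set.Ioo x y then c else 0))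
      = ((∑ k ∈ Finset.range (π.m n),
            if x < π.tag n k then F (π.pt n (k+1)) - F (π.pt n k) else 0)
        - (∑ k ∈ Finset.range (π.m n),
            if y ≤ π.tag n k then F (π.pt n (k+1)) - F (π.pt n k) else 0)) c := by
    intro n
    rw [ContinuousLinearMap.sub_apply, ContinuousLinearMap.sum_apply,
      ContinuousLinearMap.sum_apply, ← Finset.sum_sub_distrib]
    refine Finset.sum_congr rfl (fun k _ => ?_)
    by_cases h1 : x < π.tag n k
    · by_cases h2 : y ≤ π.tag n k
      · have : ¬ π.tag n k ∈ Set.Ioo x y := by simp [Set.mem_Ioo]; intro; linarith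
        simp [h1, h2, this]
      · have : π.tag n k ∈ Set.Ioo x y := ⟨h1, lt_of_not_ge h2⟩
        simp [h1, h2, this]
    · have h2 : ¬ y ≤ π.tag n k := by intro h; exact h1 (lt_of_lt_of_le hxy h)
      have : ¬ π.tag n k ∈ Set.Ioo x y := by simp [Set.mem_Ioo]; intro h; exact absurd h h1
      simp [h1, h2, this]
  simp only [key]
  have hgoal : (F y - F x) c = ((F b - F x) - (F b - F y)) c := by congr 1; abel
  rw [hgoal]
  exact tendsto_apply_of_tendsto c
    ((tendsto_threshold_sum F hFcont hub (fun τ => x < τ) ⟨hx, le_trans hxy.le hyb⟩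
        (fun τ h => h) (fun τ h => h.le) π).sub
      (tendsto_threshold_sum F hFcont hub (fun τ => y ≤ τ) ⟨le_trans hx hxy.le, hyb⟩
        (fun τ h => h.le) (fun τ h => h) π))

/-- Limit of the partition sums against a point indicator is zero. -/
lemma tendsto_point_indicator (F : ℝ → H →L[ℝ] H)
    (hFcont : ContinuousOn F (Set.Icc u b)) (hub : u < b)
    {x : ℝ} (hx : x ∈ Set.Icc u b) (c : H)
    (π : PartitionSeq u b) :
    Tendsto (fun n => ∑ k ∈ Finset.range (π.m n),
        (F (π.pt n (k+1)) - F (π.pt n k)) (if π.tag n k = x then c else 0))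
      atTop (𝓝 0) := by
  have key : ∀ n, (∑ k ∈ Finset.range (π.m n),
      (F (π.pt n (k+1)) - F (π.pt n k)) (if π.tag n k = x then c else 0))
      = ((∑ k ∈ Finset.range (π.m n),
            if x ≤ π.tag n k then F (π.pt n (k+1)) - F (π.pt n k) else 0)
        - (∑ k ∈ Finset.range (π.m n),
            if x < π.tag n k then F (π.pt n (k+1)) - F (π.pt n k) else 0)) c := by
    intro n
    rw [ContinuousLinearMap.sub_apply, ContinuousLinearMap.sum_apply,
      ContinuousLinearMap.sum_apply, ← Finset.sum_sub_distrib]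
    refine Finset.sum_congr rfl (fun k _ => ?_)
    rcases lt_trichotomy (π.tag n k) x with h | h | h
    · simp [not_le.mpr h, ne_of_lt h, asymm h, not_lt.mpr h.le]
    · simp [h]
    · simp [h.le, h, (ne_of_gt h)]
  simp only [key]
  have hgoal : (0 : H) = ((F b - F x) - (F b - F x)) c := by simp
  rw [hgoal]
  exact tendsto_apply_of_tendsto c
    ((tendsto_threshold_sum F hFcont hub (fun τ => x ≤ τ) hx
        (fun τ h => h.le) (fun τ h => h) π).sub
      (tendsto_threshold_sum F hFcont hub (fun τ => x < τ) hx
        (fun τ h => h) (fun τ h => h.le) π))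

/-- A function with one-sided limits admits, for every `ε`, a finite partition of `[u,b]`
on whose open subintervals its oscillation is at most `ε`. -/
lemma exists_osc_partition (g : ℝ → H) (hub : u < b)
    (hgr : ∀ τ ∈ Set.Ico u b, ∃ L, Tendsto g (𝓝[>] τ) (𝓝 L))
    (hgl : ∀ τ ∈ Set.Ioc u b, ∃ L, Tendsto g (𝓝[<] τ) (𝓝 L))
    {ε : ℝ} (hε : 0 < ε) :
    ∃ (p : ℕ) (x : ℕ → ℝ), x 0 = u ∧ x p = b ∧ (∀ i < p, x i < x (i+1)) ∧
      ∀ i < p, ∀ σ ∈ Set.Ioo (x i) (x (i+1)), ∀ τ ∈ Set.Ioo (x i) (x (i+1)),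
        ‖g σ - g τ‖ ≤ ε := by
  set Good : ℝ → Prop := fun y => ∃ (p : ℕ) (x : ℕ → ℝ), x 0 = u ∧ x p = y ∧
      (∀ i < p, x i < x (i+1)) ∧
      ∀ i < p, ∀ σ ∈ Set.Ioo (x i) (x (i+1)), ∀ τ ∈ Set.Ioo (x i) (x (i+1)),
        ‖g σ - g τ‖ ≤ ε with hGood
  have hGu : Good u := ⟨0, fun _ => u, rfl, rfl, by omega, by omega⟩
  have ext : ∀ y y', Good y → y < y' →
      (∀ σ ∈ Set.Ioo y y', ∀ τ ∈ Set.Ioo y y', ‖g σ - g τ‖ ≤ ε) → Good y' := by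
    rintro y y' ⟨p, x, h0, hp, hmo, hosc⟩ hyy' hosc'
    refine ⟨p+1, fun i => if i ≤ p then x i else y', by simp [h0], by simp, ?_, ?_⟩
    · intro i hi
      rcases Nat.lt_or_ge i p with h | h
      · simp only [Nat.le_of_lt h, Nat.succ_le_of_lt h, if_pos]
        exact hmo i h
      · have : i = p := by omega
        subst this
        simp only [le_rfl, if_pos, Nat.not_succ_le_self, if_neg, hp]
        exact hyy'
    · intro i hi σ hσ τ hτ
      rcases Nat.lt_or_ge i p with h | h
      · simp only [Nat.le_of_lt h, Nat.succ_le_of_lt h, if_pos] at hσ hτ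
        exact hosc i h σ hσ τ hτ
      · have : i = p := by omega
        subst this
        simp only [le_rfl, if_pos, Nat.not_succ_le_self, if_neg, hp] at hσ hτ
        exact hosc' σ hσ τ hτ
  set A : Set ℝ := {y | y ∈ Set.Icc u b ∧ Good y} with hA
  have huA : u ∈ A := ⟨⟨le_rfl, hub.le⟩, hGu⟩
  have hne : A.Nonempty := ⟨u, huA⟩
  have hbdd : BddAbove A := ⟨b, fun y hy => hy.1.2⟩
  set c := sSup A with hc
  have hcu : u ≤ c := le_csSup hbdd huA
  have hcb : c ≤ b := csSup_le hne (fun y hy => hy.1.2)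
  have hGc : Good c := by
    rcases eq_or_lt_of_le hcu with h | h
    · rw [← h]; exact hGu
    · obtain ⟨L, hL⟩ := hgl c ⟨h, hcb⟩
      have hmem : {σ : ℝ | dist (g σ) L ≤ ε/2} ∈ 𝓝[<] c :=
        hL (Metric.closedBall_mem_nhds L (by linarith))
      obtain ⟨a, ha, hsub⟩ := mem_nhdsLT_iff_exists_Ioo_subset.mp hmem
      have ha' : max a u < c := max_lt ha h
      obtain ⟨y, hyA, hy⟩ := exists_lt_of_lt_csSup hne ha'
      have hyc : y ≤ c := le_csSup hbdd hyA
      rcases eq_or_lt_of_le hyc with h2 | h2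
      · rw [← h2]; exact hyA.2
      · refine ext y c hyA.2 h2 (fun σ hσ τ hτ => ?_)
        have hσ' : σ ∈ Set.Ioo a c := ⟨lt_trans (lt_of_le_of_lt (le_max_left a u) hy) hσ.1, hσ.2⟩
        have hτ' : τ ∈ Set.Ioo a c := ⟨lt_trans (lt_of_le_of_lt (le_max_left a u) hy) hτ.1, hτ.2⟩
        calc ‖g σ - g τ‖ = dist (g σ) (g τ) := (dist_eq_norm _ _).symm
          _ ≤ dist (g σ) L + dist (g τ) L := dist_triangle_right _ _ _
          _ ≤ ε/2 + ε/2 := add_le_add (hsub hσ') (hsub hτ')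
          _ = ε := by ring
  rcases eq_or_lt_of_le hcb with hceq | hclt
  · obtain ⟨p, x, h0, hp, hmo, hosc⟩ := hGc
    exact ⟨p, x, h0, by rw [hp, hceq], hmo, hosc⟩
  · exfalso
    obtain ⟨L, hL⟩ := hgr c ⟨hcu, hclt⟩
    have hmem : {σ : ℝ | dist (g σ) L ≤ ε/2} ∈ 𝓝[>] c :=
      hL (Metric.closedBall_mem_nhds L (by linarith))
    obtain ⟨d, hd, hsub⟩ := mem_nhdsGT_iff_exists_Ioo_subset.mp hmem
    set y' := min d b with hy'
    have hcy' : c < y' := lt_min hd hclt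
    have hy'A : y' ∈ A := by
      refine ⟨⟨le_trans hcu hcy'.le, min_le_right d b⟩, ext c y' hGc hcy' ?_⟩
      intro σ hσ τ hτ
      have hσ' : σ ∈ Set.Ioo c d := ⟨hσ.1, lt_of_lt_of_le hσ.2 (min_le_left d b)⟩
      have hτ' : τ ∈ Set.Ioo c d := ⟨hτ.1, lt_of_lt_of_le hτ.2 (min_le_left d b)⟩
      calc ‖g σ - g τ‖ = dist (g σ) (g τ) := (dist_eq_norm _ _).symm
        _ ≤ dist (g σ) L + dist (g τ) L := dist_triangle_right _ _ _
        _ ≤ ε/2 + ε/2 := add_le_add (hsub hσ') (hsub hτ')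
        _ = ε := by ring
    exact absurd (le_csSup hbdd hy'A) (not_le.mpr hcy')

/-- The uniform partition sequence with left-endpoint tags. -/
def unifPart (hub : u < b) : PartitionSeq u b where
  m n := n + 1
  pt n k := u + k * ((b - u) / (n + 1))
  tag n k := u + k * ((b - u) / (n + 1))
  left n := by simp
  right n := by field_simp; push_cast; ring
  mono n k _ := by
    have h1 : (0:ℝ) < (b - u) / (n + 1) := div_pos (by linarith) (by positivity)
    have : ((k:ℝ)+1) * ((b - u) / (n + 1)) = k * ((b - u) / (n + 1)) + (b - u) / (n + 1) := by ring
    push_cast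
    rw [this]
    linarith
  tag_mem n k hk := ⟨le_rfl, by
    have h1 : (0:ℝ) < (b - u) / (n + 1) := div_pos (by linarith) (by positivity)
    have : ((k:ℝ)+1) * ((b - u) / (n + 1)) = k * ((b - u) / (n + 1)) + (b - u) / (n + 1) := by ring
    push_cast
    rw [this]
    linarith⟩
  mesh ε hε := by
    obtain ⟨N, hN⟩ := exists_nat_gt ((b - u) / ε)
    refine ⟨N, fun n hn k _ => ?_⟩
    push_cast
    have he : u + ((k:ℝ)+1) * ((b - u) / (n + 1)) - (u + k * ((b - u) / (n + 1)))
        = (b - u) / (n + 1) := by ring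
    rw [he, div_lt_iff₀ (by positivity)]
    have h2 : (b - u) / ε < (n:ℝ) + 1 := lt_of_lt_of_le hN (by exact_mod_cast Nat.le_succ_of_le hn)
    calc b - u = ((b - u) / ε) * ε := by field_simp
      _ < ((n:ℝ)+1) * ε := by
          apply mul_lt_mul_of_pos_right h2 hε
      _ = ε * ((n:ℝ)+1) := by ring

/-- Partition sums are bounded by `C` times a uniform bound of the integrand. -/
lemma pathSum_bound (F : ℝ → H →L[ℝ] H) {C : ℝ}
    (hFC : ∀ (m : ℕ) (pt : ℕ → ℝ), pt 0 = u → pt m = b → (∀ k < m, pt k ≤ pt (k+1)) →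
       ∑ k ∈ Finset.range m, ‖F (pt (k+1)) - F (pt k)‖ ≤ C)
    (φ : ℝ → H) {M : ℝ} (hM : 0 ≤ M) (hφ : ∀ τ ∈ Set.Icc u b, ‖φ τ‖ ≤ M)
    (π : PartitionSeq u b) (n : ℕ) :
    ‖∑ k ∈ Finset.range (π.m n), (F (π.pt n (k+1)) - F (π.pt n k)) (φ (π.tag n k))‖
      ≤ C * M := by
  calc ‖∑ k ∈ Finset.range (π.m n), (F (π.pt n (k+1)) - F (π.pt n k)) (φ (π.tag n k))‖
      ≤ ∑ k ∈ Finset.range (π.m n), ‖(F (π.pt n (k+1)) - F (π.pt n k)) (φ (π.tag n k))‖ :=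
        norm_sum_le _ _
    _ ≤ ∑ k ∈ Finset.range (π.m n), ‖F (π.pt n (k+1)) - F (π.pt n k)‖ * M := by
        refine Finset.sum_le_sum (fun k hk => ?_)
        rw [Finset.mem_range] at hk
        calc ‖(F (π.pt n (k+1)) - F (π.pt n k)) (φ (π.tag n k))‖
            ≤ ‖F (π.pt n (k+1)) - F (π.pt n k)‖ * ‖φ (π.tag n k)‖ :=
              ContinuousLinearMap.le_opNorm _ _
          _ ≤ ‖F (π.pt n (k+1)) - F (π.pt n k)‖ * M :=
              mul_le_mul_of_nonneg_left (hφ _ (PS.tag_mem' π n hk)) (norm_nonneg _)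
    _ = (∑ k ∈ Finset.range (π.m n), ‖F (π.pt n (k+1)) - F (π.pt n k)‖) * M := by
        rw [Finset.sum_mul]
    _ ≤ C * M := by
        refine mul_le_mul_of_nonneg_right
          (hFC (π.m n) (π.pt n) (π.left n) (π.right n)
            (fun k hk => (π.mono n k hk).le)) hM

/-- **Key analytic lemma**: if `F` is continuous of bounded variation on `[u,b]` and `g` has
one-sided limits, then the Riemann–Stieltjes sums `∑ (F(pt k+1) - F(pt k)) (g tag)` converge
to a limit independent of the partition sequence. -/
lemma exists_pathRSLimit [CompleteSpace H] (F : ℝ → H →L[ℝ] H) (hub : u < b) {C : ℝ}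
    (hFC : ∀ (m : ℕ) (pt : ℕ → ℝ), pt 0 = u → pt m = b → (∀ k < m, pt k ≤ pt (k+1)) →
       ∑ k ∈ Finset.range m, ‖F (pt (k+1)) - F (pt k)‖ ≤ C)
    (hFcont : ContinuousOn F (Set.Icc u b))
    (g : ℝ → H)
    (hgr : ∀ τ ∈ Set.Ico u b, ∃ L, Tendsto g (𝓝[>] τ) (𝓝 L))
    (hgl : ∀ τ ∈ Set.Ioc u b, ∃ L, Tendsto g (𝓝[<] τ) (𝓝 L)) :
    ∃ v, ∀ π : PartitionSeq u b,
      Tendsto (fun n => ∑ k ∈ Finset.range (π.m n),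
          (F (π.pt n (k+1)) - F (π.pt n k)) (g (π.tag n k))) atTop (𝓝 v) := by
  classical
  have hC0 : 0 ≤ C := by
    have h1 := hFC 1 (fun k => if k = 0 then u else b) (by simp) (by simp) (by
      intro k hk
      interval_cases k
      simp [hub.le])
    simp only [Finset.sum_range_one] at h1
    norm_num at h1
    exact le_trans (norm_nonneg _) h1
  -- step approximations
  have happrox : ∀ j : ℕ, ∃ (h : ℝ → H) (v : H),
      (∀ τ ∈ Set.Icc u b, ‖g τ - h τ‖ ≤ 1/(j+1)) ∧
      (∀ π : PartitionSeq u b,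
        Tendsto (fun n => ∑ k ∈ Finset.range (π.m n),
            (F (π.pt n (k+1)) - F (π.pt n k)) (h (π.tag n k))) atTop (𝓝 v)) := by
    intro j
    obtain ⟨p, x, hx0, hxp, hxmo, hxosc⟩ := exists_osc_partition g hub hgr hgl
      (ε := 1/(j+1)) (by positivity)
    have hxle : ∀ i i', i ≤ i' → i' ≤ p → x i ≤ x i' :=
      fun i i' h h' => chain_mono (fun k hk => (hxmo k hk).le) i i' h h'
    have hxmem : ∀ i, i ≤ p → x i ∈ Set.Icc u b := fun i hi =>
      ⟨hx0 ▸ hxle 0 i (Nat.zero_le i) hi, hxp ▸ hxle i p hi le_rfl⟩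
    set mid : ℕ → ℝ := fun i => (x i + x (i+1)) / 2 with hmid
    have hmidmem : ∀ i < p, mid i ∈ Set.Ioo (x i) (x (i+1)) := by
      intro i hi
      constructor <;> · simp only [hmid]; linarith [hxmo i hi]
    set h : ℝ → H := fun τ =>
      (∑ i ∈ Finset.range p, if τ ∈ Set.Ioo (x i) (x (i+1)) then g (mid i) else 0)
      + (∑ i ∈ Finset.range (p+1), if τ = x i then g (x i) else 0) with hh
    refine ⟨h, (∑ i ∈ Finset.range p, (F (x (i+1)) - F (x i)) (g (mid i))) + 0, ?_, ?_⟩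
    · -- closeness
      intro τ hτ
      by_cases hxi : ∃ i, i ≤ p ∧ τ = x i
      · obtain ⟨i, hip, hτx⟩ := hxi
        have h1 : (∑ i' ∈ Finset.range p, if τ ∈ Set.Ioo (x i') (x (i'+1)) then g (mid i') else 0) = 0 := by
          refine Finset.sum_eq_zero (fun i' hi' => ?_)
          rw [Finset.mem_range] at hi'
          have : ¬ τ ∈ Set.Ioo (x i') (x (i'+1)) := by
            rintro ⟨ha, hb⟩
            rcases Nat.lt_or_ge i (i'+1) with hc | hc
            · exact absurd (hτx ▸ hxle i i' (Nat.lt_succ_iff.mp hc) (le_of_lt hi')) (not_le.mpr ha)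
            · exact absurd (hτx ▸ hxle (i'+1) i hc hip) (not_le.mpr hb)
          simp [this]
        have h2 : (∑ i' ∈ Finset.range (p+1), if τ = x i' then g (x i') else 0) = g τ := by
          rw [Finset.sum_eq_single i]
          · simp [hτx]
          · intro i' hi' hne
            rw [Finset.mem_range, Nat.lt_succ_iff] at hi'
            have : τ ≠ x i' := by
              rw [hτx]
              rcases Nat.lt_or_ge i' i with hc | hc
              · exact (ne_of_gt (lt_of_lt_of_le (hxmo i' (lt_of_lt_of_le hc hip))
                  (hxle (i'+1) i hc hip)))
              · have hc' : i < i' := lt_of_le_of_ne hc (Ne.symm hne)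
                exact ne_of_lt (lt_of_lt_of_le (hxmo i (lt_of_lt_of_le hc' hi'))
                  (hxle (i+1) i' hc' hi'))
            simp [this]
          · intro hi'
            exact absurd (Finset.mem_range.mpr (Nat.lt_succ_of_le hip)) hi'
        rw [hh]
        simp only [h1, h2, zero_add]
        simp [sub_self]
        positivity
      · push_neg at hxi
        -- find the interval containing τ
        have hup : u < τ := by
          rcases eq_or_lt_of_le hτ.1 with h' | h'
          · exact absurd h'.symm (by rw [← hx0]; exact hxi 0 (Nat.zero_le p))
          · exact h'
        set S := (Finset.range (p+1)).filter (fun i => x i < τ) with hS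
        have hSne : S.Nonempty := ⟨0, Finset.mem_filter.mpr
          ⟨Finset.mem_range.mpr (Nat.succ_pos p), by rw [hx0]; exact hup⟩⟩
        set i := S.max' hSne with hi
        obtain ⟨hir, hxiτ⟩ := Finset.mem_filter.mp (S.max'_mem hSne)
        rw [← hi] at hir hxiτ
        have hip : i ≤ p := Nat.lt_succ_iff.mp (Finset.mem_range.mp hir)
        have hipp : i < p := by
          rcases eq_or_lt_of_le hip with h' | h'
          · exfalso; rw [h', hxp] at hxiτ; exact absurd hxiτ (not_lt.mpr hτ.2)
          · exact h'
        have hτlt : τ < x (i+1) := by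
          rcases lt_trichotomy τ (x (i+1)) with h' | h' | h'
          · exact h'
          · exact absurd h' (hxi (i+1) hipp)
          · exfalso
            have hmem : i + 1 ∈ S := Finset.mem_filter.mpr
              ⟨Finset.mem_range.mpr (Nat.succ_lt_succ hipp), h'⟩
            have := S.le_max' _ hmem
            omega
        have hmem : τ ∈ Set.Ioo (x i) (x (i+1)) := ⟨hxiτ, hτlt⟩
        have h1 : (∑ i' ∈ Finset.range p,
            if τ ∈ Set.Ioo (x i') (x (i'+1)) then g (mid i') else 0) = g (mid i) := by
          rw [Finset.sum_eq_single i]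
          · simp [hmem]
          · intro i' hi' hne
            rw [Finset.mem_range] at hi'
            have hni : ¬ τ ∈ Set.Ioo (x i') (x (i'+1)) := by
              rintro ⟨ha, hb⟩
              rcases Nat.lt_or_ge i' i with hc | hc
              · have := hxle (i'+1) i hc hip
                linarith [hmem.1]
              · have hc' : i < i' := lt_of_le_of_ne hc (Ne.symm hne)
                have := hxle (i+1) i' hc' hi'.le
                linarith [hmem.2]
            simp [hni]
          · intro h'
            exact absurd (Finset.mem_range.mpr hipp) h'
        have h2 : (∑ i' ∈ Finset.range (p+1), if τ = x i' then g (x i') else 0) = 0 :=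
          Finset.sum_eq_zero (fun i' hi' => by
            rw [Finset.mem_range, Nat.lt_succ_iff] at hi'
            simp [hxi i' hi'])
        rw [hh]
        simp only [h1, h2, add_zero]
        exact hxosc i hipp τ hmem (mid i) (hmidmem i hipp)
    · -- the limit for the step function
      intro π
      have hsplit : ∀ n, (∑ k ∈ Finset.range (π.m n),
          (F (π.pt n (k+1)) - F (π.pt n k)) (h (π.tag n k)))
          = (∑ i ∈ Finset.range p, ∑ k ∈ Finset.range (π.m n),
              (F (π.pt n (k+1)) - F (π.pt n k))
                (if π.tag n k ∈ Set.Ioo (x i) (x (i+1)) then g (mid i) else 0))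
            + (∑ i ∈ Finset.range (p+1), ∑ k ∈ Finset.range (π.m n),
              (F (π.pt n (k+1)) - F (π.pt n k))
                (if π.tag n k = x i then g (x i) else 0)) := by
        intro n
        calc (∑ k ∈ Finset.range (π.m n),
            (F (π.pt n (k+1)) - F (π.pt n k)) (h (π.tag n k)))
            = ∑ k ∈ Finset.range (π.m n),
              ((∑ i ∈ Finset.range p, (F (π.pt n (k+1)) - F (π.pt n k))
                (if π.tag n k ∈ Set.Ioo (x i) (x (i+1)) then g (mid i) else 0))
              + (∑ i ∈ Finset.range (p+1), (F (π.pt n (k+1)) - F (π.pt n k))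
                (if π.tag n k = x i then g (x i) else 0))) := by
              refine Finset.sum_congr rfl (fun k _ => ?_)
              rw [hh]
              rw [map_add, map_sum, map_sum]
          _ = _ := by
              rw [Finset.sum_add_distrib]
              congr 1
              · exact Finset.sum_comm
              · exact Finset.sum_comm
      simp only [hsplit]
      refine Tendsto.add ?_ ?_
      · refine tendsto_finset_sum _ (fun i hi => ?_)
        rw [Finset.mem_range] at hi
        exact tendsto_interval_indicator F hFcont hub (hxmem i hi.le).1 (hxmo i hi)
          (hxmem (i+1) hi).2 (g (mid i)) π
      · have ht := tendsto_finset_sum (Finset.range (p+1)) (fun i hi =>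
          tendsto_point_indicator F hFcont hub
            (hxmem i (Nat.lt_succ_iff.mp (Finset.mem_range.mp hi))) (g (x i)) π)
        simpa using ht
  -- assemble: approximation argument
  choose hseq vseq hclose hlim using happrox
  have hgb : ∀ (j : ℕ) (π : PartitionSeq u b) (n : ℕ),
      ‖(∑ k ∈ Finset.range (π.m n), (F (π.pt n (k+1)) - F (π.pt n k)) (g (π.tag n k)))
        - (∑ k ∈ Finset.range (π.m n), (F (π.pt n (k+1)) - F (π.pt n k)) (hseq j (π.tag n k)))‖
        ≤ C * (1/(j+1)) := by
    intro j π n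
    have heq : (∑ k ∈ Finset.range (π.m n), (F (π.pt n (k+1)) - F (π.pt n k)) (g (π.tag n k)))
        - (∑ k ∈ Finset.range (π.m n), (F (π.pt n (k+1)) - F (π.pt n k)) (hseq j (π.tag n k)))
        = ∑ k ∈ Finset.range (π.m n),
            (F (π.pt n (k+1)) - F (π.pt n k)) ((g - hseq j) (π.tag n k)) := by
      rw [← Finset.sum_sub_distrib]
      refine Finset.sum_congr rfl (fun k _ => ?_)
      rw [← map_sub]
      rfl
    rw [heq]
    exact pathSum_bound F hFC (g - hseq j) (by positivity)
      (fun τ hτ => by simpa using hclose j τ hτ) π n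
  have hbound : ∀ (j i : ℕ) (π : PartitionSeq u b) (n : ℕ),
      ‖(∑ k ∈ Finset.range (π.m n), (F (π.pt n (k+1)) - F (π.pt n k)) (hseq j (π.tag n k)))
        - (∑ k ∈ Finset.range (π.m n), (F (π.pt n (k+1)) - F (π.pt n k)) (hseq i (π.tag n k)))‖
        ≤ C * (1/(j+1) + 1/(i+1)) := by
    intro j i π n
    have heq : (∑ k ∈ Finset.range (π.m n), (F (π.pt n (k+1)) - F (π.pt n k)) (hseq j (π.tag n k)))
        - (∑ k ∈ Finset.range (π.m n), (F (π.pt n (k+1)) - F (π.pt n k)) (hseq i (π.tag n k)))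
        = ∑ k ∈ Finset.range (π.m n),
            (F (π.pt n (k+1)) - F (π.pt n k)) ((hseq j - hseq i) (π.tag n k)) := by
      rw [← Finset.sum_sub_distrib]
      refine Finset.sum_congr rfl (fun k _ => ?_)
      rw [← map_sub]
      rfl
    rw [heq]
    refine pathSum_bound F hFC (hseq j - hseq i) (by positivity) (fun τ hτ => ?_) π n
    have hj := hclose j τ hτ
    have hi' := hclose i τ hτ
    calc ‖(hseq j - hseq i) τ‖ = ‖(hseq j τ - g τ) + (g τ - hseq i τ)‖ := by
          simp only [Pi.sub_apply]; congr 1; abel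
      _ ≤ ‖hseq j τ - g τ‖ + ‖g τ - hseq i τ‖ := norm_add_le _ _
      _ ≤ 1/(j+1) + 1/(i+1) := by
          rw [norm_sub_rev]
          exact add_le_add hj hi'
  set π₀ := unifPart hub with hπ₀
  have hvdist : ∀ N j i, N ≤ j → N ≤ i → dist (vseq j) (vseq i) ≤ C * (2/(N+1)) := by
    intro N j i hNj hNi
    have h1 : Tendsto (fun n =>
        (∑ k ∈ Finset.range (π₀.m n), (F (π₀.pt n (k+1)) - F (π₀.pt n k)) (hseq j (π₀.tag n k)))
        - (∑ k ∈ Finset.range (π₀.m n), (F (π₀.pt n (k+1)) - F (π₀.pt n k)) (hseq i (π₀.tag n k))))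
        atTop (𝓝 (vseq j - vseq i)) := (hlim j π₀).sub (hlim i π₀)
    have h3 : ‖vseq j - vseq i‖ ≤ C * (1/(j+1) + 1/(i+1)) := by
      refine le_of_tendsto h1.norm (Filter.Eventually.of_forall (fun n => hbound j i π₀ n))
    rw [dist_eq_norm]
    refine le_trans h3 (mul_le_mul_of_nonneg_left ?_ hC0)
    have e1 : (1:ℝ)/(j+1) ≤ 1/(N+1) := by
      apply one_div_le_one_div_of_le (by positivity)
      exact_mod_cast Nat.succ_le_succ hNj
    have e2 : (1:ℝ)/(i+1) ≤ 1/(N+1) := by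
      apply one_div_le_one_div_of_le (by positivity)
      exact_mod_cast Nat.succ_le_succ hNi
    have : (2:ℝ)/(N+1) = 1/(N+1) + 1/(N+1) := by ring
    rw [this]
    exact add_le_add e1 e2
  have htend0 : Tendsto (fun N : ℕ => C * (2/(N+1))) atTop (𝓝 0) := by
    have h := tendsto_one_div_add_atTop_nhds_zero_nat.const_mul (C * 2)
    rw [mul_zero] at h
    refine h.congr (fun N => ?_)
    field_simp
  have hcauchy : CauchySeq vseq :=
    cauchySeq_of_le_tendsto_0 (fun N => C * (2/(N+1))) (fun j i N hj hi => hvdist N j i hj hi) htend0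
  obtain ⟨v, hv⟩ := cauchySeq_tendsto_of_complete hcauchy
  have hvj : ∀ j : ℕ, dist (vseq j) v ≤ C * (2/(j+1)) := by
    intro j
    have h1 : Tendsto (fun i => dist (vseq j) (vseq i)) atTop (𝓝 (dist (vseq j) v)) :=
      tendsto_const_nhds.dist hv
    refine le_of_tendsto h1 ?_
    filter_upwards [eventually_ge_atTop j] with i hi
    exact hvdist j j i le_rfl hi
  refine ⟨v, fun π => ?_⟩
  rw [Metric.tendsto_atTop]
  intro ε hε
  have htend3 : Tendsto (fun j : ℕ => C * (3/(j+1))) atTop (𝓝 0) := by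
    have h := tendsto_one_div_add_atTop_nhds_zero_nat.const_mul (C * 3)
    rw [mul_zero] at h
    refine h.congr (fun N => ?_)
    field_simp
  have hev : ∀ᶠ j : ℕ in atTop, C * (3/((j:ℝ)+1)) < ε/2 := by
    have := htend3.eventually (eventually_lt_nhds (show (0:ℝ) < ε/2 by linarith))
    exact this
  obtain ⟨j, hj⟩ := hev.exists
  obtain ⟨N, hN⟩ := (Metric.tendsto_atTop.mp (hlim j π)) (ε/2) (by linarith)
  refine ⟨N, fun n hn => ?_⟩
  have hd1 := hgb j π n
  have hd2 := hN n hn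
  have hd3 := hvj j
  calc dist (∑ k ∈ Finset.range (π.m n),
        (F (π.pt n (k+1)) - F (π.pt n k)) (g (π.tag n k))) v
      ≤ dist (∑ k ∈ Finset.range (π.m n),
          (F (π.pt n (k+1)) - F (π.pt n k)) (g (π.tag n k)))
        (∑ k ∈ Finset.range (π.m n),
          (F (π.pt n (k+1)) - F (π.pt n k)) (hseq j (π.tag n k)))
        + dist (∑ k ∈ Finset.range (π.m n),
          (F (π.pt n (k+1)) - F (π.pt n k)) (hseq j (π.tag n k))) (vseq j)
        + dist (vseq j) v := dist_triangle4 _ _ _ _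
    _ ≤ C * (1/(j+1)) + dist (∑ k ∈ Finset.range (π.m n),
          (F (π.pt n (k+1)) - F (π.pt n k)) (hseq j (π.tag n k))) (vseq j)
        + C * (2/(j+1)) := by
        refine add_le_add (add_le_add ?_ le_rfl) hd3
        rw [dist_eq_norm]; exact hd1
    _ < ε := by
        have he : C * (1/((j:ℝ)+1)) + C * (2/((j:ℝ)+1)) = C * (3/((j:ℝ)+1)) := by ring
        linarith [hj, hd2]

/-- The uniform partition sequence with right-endpoint tags. -/
def unifPartR (hub : u < b) : PartitionSeq u b where
  m n := (unifPart hub).m n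
  pt := (unifPart hub).pt
  tag n k := (unifPart hub).pt n (k+1)
  left := (unifPart hub).left
  right := (unifPart hub).right
  mono := (unifPart hub).mono
  tag_mem n k hk := ⟨((unifPart hub).mono n k hk).le, le_rfl⟩
  mesh := (unifPart hub).mesh

lemma telescope_sum {G : Type*} [AddCommGroup G] (f : ℕ → G) (m : ℕ) :
    ∑ k ∈ Finset.range m, (f (k+1) - f k) = f m - f 0 := by
  induction m with
  | zero => simp
  | succ m ih => rw [Finset.sum_range_succ, ih]; abel

/-- Abel summation / summation by parts for the Riemann–Stieltjes sums. -/
lemma abel_sum (F : ℝ → H →L[ℝ] H) (Z : ℝ → H) (m : ℕ) (pt : ℕ → ℝ) :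
    (∑ k ∈ Finset.range m, F (pt k) (Z (pt (k+1)) - Z (pt k)))
      + (∑ k ∈ Finset.range m, (F (pt (k+1)) - F (pt k)) (Z (pt (k+1))))
      = F (pt m) (Z (pt m)) - F (pt 0) (Z (pt 0)) := by
  rw [← Finset.sum_add_distrib]
  have hcg : ∀ k ∈ Finset.range m,
      (F (pt k) (Z (pt (k+1)) - Z (pt k)) + (F (pt (k+1)) - F (pt k)) (Z (pt (k+1))))
      = (fun j => F (pt j) (Z (pt j))) (k+1) - (fun j => F (pt j) (Z (pt j))) k := by
    intro k _
    simp only [map_sub, ContinuousLinearMap.sub_apply]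
    abel
  rw [Finset.sum_congr rfl hcg, telescope_sum (fun j => F (pt j) (Z (pt j))) m]

section RCont

variable [CompleteSpace H]

/-- Bounded variation bound along monotone chains in `[0,T]`. -/
lemma bv_chain_bound {T C : ℝ} (hT : 0 < T) (R : ℝ → H →L[ℝ] H)
    (hBV : ∀ (m : ℕ) (pt : ℕ → ℝ), pt 0 = 0 → pt m = T → (∀ k < m, pt k ≤ pt (k+1)) →
      ∑ k ∈ Finset.range m, ‖R (pt (k+1)) - R (pt k)‖ ≤ C)
    (N : ℕ) (z : ℕ → ℝ) (hmem : ∀ n ≤ N, z n ∈ Set.Icc 0 T)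
    (hmono : ∀ n < N, z n ≤ z (n+1)) :
    ∑ n ∈ Finset.range N, ‖R (z (n+1)) - R (z n)‖ ≤ C := by
  set pt : ℕ → ℝ := fun k => if k = 0 then 0 else if k ≤ N + 1 then z (k - 1) else T with hpt
  have h0 : pt 0 = 0 := by simp [hpt]
  have hlast : pt (N + 2) = T := by simp [hpt]
  have hmono' : ∀ k < N + 2, pt k ≤ pt (k+1) := by
    intro k hk
    rcases Nat.eq_zero_or_pos k with rfl | hkpos
    · simp only [hpt, if_pos rfl]
      have : (1:ℕ) ≤ N + 1 := by omega
      simp only [Nat.one_ne_zero, if_neg, this, if_pos]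
      exact (hmem 0 (Nat.zero_le N)).1
    · have hk1 : k ≠ 0 := Nat.pos_iff_ne_zero.mp hkpos
      have hk2 : k + 1 ≠ 0 := Nat.succ_ne_zero k
      rcases Nat.lt_or_ge k (N+1) with h1 | h1
      · have e1 : k ≤ N + 1 := h1.le
        have e2 : k + 1 ≤ N + 1 := h1
        simp only [hpt, if_neg hk1, if_neg hk2, if_pos e1, if_pos e2]
        have : k - 1 < N := by omega
        have := hmono (k-1) this
        have e3 : k - 1 + 1 = k := by omega
        rw [e3] at this
        have e4 : k + 1 - 1 = k := by omega
        rw [e4]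
        exact this
      · have e1 : k = N + 1 := by omega
        subst e1
        have e2 : ¬ (N + 2 ≤ N + 1) := by omega
        simp only [hpt, if_neg hk1, if_neg hk2, if_pos le_rfl, if_neg e2]
        have : N + 1 - 1 = N := by omega
        rw [this]
        exact (hmem N le_rfl).2
  have hsum := hBV (N+2) pt h0 hlast hmono'
  have hsplit : ∑ k ∈ Finset.range (N+2), ‖R (pt (k+1)) - R (pt k)‖
      = (∑ k ∈ Finset.range (N+1), ‖R (pt (k+1+1)) - R (pt (k+1))‖) + ‖R (pt 1) - R (pt 0)‖ := by
    rw [Finset.sum_range_succ']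
  have hsub : ∑ n ∈ Finset.range N, ‖R (z (n+1)) - R (z n)‖
      = ∑ k ∈ Finset.range N, ‖R (pt (k+1+1)) - R (pt (k+1))‖ := by
    refine Finset.sum_congr rfl (fun k hk => ?_)
    rw [Finset.mem_range] at hk
    have e1 : k + 1 ≠ 0 := Nat.succ_ne_zero k
    have e2 : k + 1 + 1 ≠ 0 := Nat.succ_ne_zero _
    have e3 : k + 1 ≤ N + 1 := by omega
    have e4 : k + 1 + 1 ≤ N + 1 := by omega
    simp only [hpt, if_neg e1, if_neg e2, if_pos e3, if_pos e4]
    norm_num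
  rw [hsub]
  calc ∑ k ∈ Finset.range N, ‖R (pt (k+1+1)) - R (pt (k+1))‖
      ≤ ∑ k ∈ Finset.range (N+1), ‖R (pt (k+1+1)) - R (pt (k+1))‖ := by
        refine Finset.sum_le_sum_of_subset_of_nonneg ?_ (fun _ _ _ => norm_nonneg _)
        exact Finset.range_subset_range.mpr (Nat.le_succ N)
    _ ≤ ∑ k ∈ Finset.range (N+2), ‖R (pt (k+1)) - R (pt k)‖ := by
        rw [hsplit]
        exact le_add_of_nonneg_right (norm_nonneg _)
    _ ≤ C := hsum

/-- Convergence of `R` along monotone or antitone sequences, with identification of the limit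
through a dense set on which `R` is strongly continuous. -/
lemma tendsto_R_of_monotone {T C : ℝ} (hT : 0 < T) (R : ℝ → H →L[ℝ] H)
    (hBV : ∀ (m : ℕ) (pt : ℕ → ℝ), pt 0 = 0 → pt m = T → (∀ k < m, pt k ≤ pt (k+1)) →
      ∑ k ∈ Finset.range m, ‖R (pt (k+1)) - R (pt k)‖ ≤ C)
    {D : Set H} (hD : Dense D)
    (hsc : ∀ x ∈ D, ContinuousOn (fun s => R s x) (Set.Ici 0))
    {s : ℝ} (hs : s ∈ Set.Icc 0 T)
    (z : ℕ → ℝ) (hmem : ∀ n, z n ∈ Set.Icc 0 T)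
    (hmono : Monotone z ∨ Antitone z)
    (hz : Tendsto z atTop (𝓝 s)) :
    Tendsto (fun n => R (z n)) atTop (𝓝 (R s)) := by
  have hsummable : Summable (fun n => ‖R (z (n+1)) - R (z n)‖) := by
    refine summable_of_sum_range_le (c := C) (fun n => norm_nonneg _) (fun N => ?_)
    rcases hmono with hm | hm
    · exact bv_chain_bound hT R hBV N z (fun n _ => hmem n) (fun n _ => hm (Nat.le_succ n))
    · -- reverse the chain
      have : ∑ n ∈ Finset.range N, ‖R (z (n+1)) - R (z n)‖
          = ∑ n ∈ Finset.range N, ‖R ((fun i => z (N - i)) (n+1)) - R ((fun i => z (N - i)) n)‖ := by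
        rw [← Finset.sum_range_reflect]
        refine Finset.sum_congr rfl (fun k hk => ?_)
        rw [Finset.mem_range] at hk
        simp only []
        have e2 : N - 1 - k + 1 = N - k := by omega
        have e9 : N - 1 - k = N - (k + 1) := by omega
        rw [e2, e9, norm_sub_rev]
      rw [this]
      exact bv_chain_bound hT R hBV N (fun i => z (N - i)) (fun n _ => hmem _)
        (fun n hn => hm (by omega : N - (n+1) ≤ N - n))
  have hcauchy : CauchySeq (fun n => R (z n)) := by
    refine cauchySeq_of_summable_dist ?_
    refine hsummable.congr (fun n => ?_)
    rw [dist_eq_norm, norm_sub_rev]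
  obtain ⟨L, hL⟩ := cauchySeq_tendsto_of_complete hcauchy
  -- identify the limit on the dense set
  have hLR : L = R s := by
    have hfun : (L : H → H) = (R s : H → H) := by
      refine Continuous.ext_on hD L.continuous (R s).continuous (fun x hx => ?_)
      have h1 : Tendsto (fun n => R (z n) x) atTop (𝓝 (L x)) := tendsto_apply_of_tendsto x hL
      have h2 : Tendsto (fun n => R (z n) x) atTop (𝓝 (R s x)) := by
        have hc : ContinuousWithinAt (fun s => R s x) (Set.Ici 0) s := hsc x hx s hs.1
        refine hc.tendsto.comp ?_
        refine tendsto_nhdsWithin_of_tendsto_nhds_of_eventually_within z hz ?_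
        exact Filter.Eventually.of_forall (fun n => (hmem n).1)
      exact tendsto_nhds_unique h1 h2
    exact ContinuousLinearMap.ext (fun x => congrFun hfun x)
  rwa [hLR] at hL

/-- Operator-norm continuity of a BV family which is strongly continuous on a dense set. -/
lemma continuousOn_of_bv_dense {T C : ℝ} (hT : 0 < T) (R : ℝ → H →L[ℝ] H)
    (hBV : ∀ (m : ℕ) (pt : ℕ → ℝ), pt 0 = 0 → pt m = T → (∀ k < m, pt k ≤ pt (k+1)) →
      ∑ k ∈ Finset.range m, ‖R (pt (k+1)) - R (pt k)‖ ≤ C)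
    {D : Set H} (hD : Dense D)
    (hsc : ∀ x ∈ D, ContinuousOn (fun s => R s x) (Set.Ici 0)) :
    ContinuousOn R (Set.Icc 0 T) := by
  intro s hs
  rw [ContinuousWithinAt, tendsto_iff_seq_tendsto]
  intro y hy
  refine tendsto_of_subseq_tendsto (fun ns hns => ?_)
  have hy' : Tendsto (fun n => y (ns n)) atTop (𝓝[Set.Icc 0 T] s) := hy.comp hns
  have hmem : ∀ᶠ n in atTop, y (ns n) ∈ Set.Icc 0 T :=
    hy'.eventually (eventually_mem_nhdsWithin)
  obtain ⟨N₀, hN₀⟩ := eventually_atTop.mp hmem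
  set w : ℕ → ℝ := fun n => y (ns (n + N₀)) with hw
  have hwmem : ∀ n, w n ∈ Set.Icc 0 T := fun n => hN₀ (n + N₀) (Nat.le_add_left N₀ n)
  have hwt : Tendsto w atTop (𝓝 s) := by
    have h1 : Tendsto (fun n => n + N₀) atTop atTop := tendsto_atTop_atTop_of_monotone
      (fun a b hab => by omega) (fun c => ⟨c, Nat.le_add_right c N₀⟩)
    exact (hy'.mono_right nhdsWithin_le_nhds).comp h1
  obtain ⟨g, hg⟩ := exists_increasing_or_nonincreasing_subseq' (fun x y : ℝ => x ≤ y) w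
  have hmonoa : Monotone (w ∘ g) ∨ Antitone (w ∘ g) := by
    rcases hg with h | h
    · exact Or.inl (monotone_nat_of_le_succ h)
    · right
      intro i j hij
      rcases eq_or_lt_of_le hij with rfl | hlt
      · exact le_rfl
      · exact (not_le.mp (h i j hlt)).le
  have hzt : Tendsto (w ∘ g) atTop (𝓝 s) :=
    hwt.comp (StrictMono.tendsto_atTop g.strictMono)
  have := tendsto_R_of_monotone hT R hBV hD hsc hs (w ∘ g) (fun n => hwmem (g n)) hmonoa hzt
  exact ⟨fun n => g n + N₀, this⟩

end RCont

/-- Transfer of the variation bound from `R` on `[0,t]` to `F = R (t - ·)` on `[u,b]`. -/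
lemma bv_transfer {t C : ℝ} (R : ℝ → H →L[ℝ] H) (hu : 0 ≤ u) (hbt : b ≤ t) (hub : u < b)
    (hBV : ∀ (m : ℕ) (pt : ℕ → ℝ), pt 0 = 0 → pt m = t → (∀ k < m, pt k ≤ pt (k+1)) →
      ∑ k ∈ Finset.range m, ‖R (pt (k+1)) - R (pt k)‖ ≤ C) :
    ∀ (m : ℕ) (pt : ℕ → ℝ), pt 0 = u → pt m = b → (∀ k < m, pt k ≤ pt (k+1)) →
      ∑ k ∈ Finset.range m, ‖R (t - pt (k+1)) - R (t - pt k)‖ ≤ C := by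
  intro m pt h0 hm hmono
  have hptle : ∀ i j, i ≤ j → j ≤ m → pt i ≤ pt j := chain_mono hmono
  set pt' : ℕ → ℝ := fun j => if j = 0 then 0 else if j ≤ m + 1 then t - pt (m + 1 - j) else t
    with hpt'
  have h0' : pt' 0 = 0 := by simp [hpt']
  have hlast' : pt' (m + 2) = t := by simp [hpt']
  have hmono' : ∀ j < m + 2, pt' j ≤ pt' (j+1) := by
    intro j hj
    rcases Nat.eq_zero_or_pos j with rfl | hjpos
    · rw [h0']
      have hb : pt' 1 = t - b := by
        have e1 : (1:ℕ) ≤ m + 1 := by omega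
        have e2 : m + 1 - 1 = m := by omega
        simp only [hpt', if_neg (Nat.one_ne_zero), if_pos e1, e2, hm]
      rw [hb]
      linarith
    · have hj1 : j ≠ 0 := Nat.pos_iff_ne_zero.mp hjpos
      have hj2 : j + 1 ≠ 0 := Nat.succ_ne_zero j
      rcases Nat.lt_or_ge j (m+1) with h1 | h1
      · have e1 : j ≤ m + 1 := h1.le
        have e2 : j + 1 ≤ m + 1 := h1
        simp only [hpt', if_neg hj1, if_neg hj2, if_pos e1, if_pos e2]
        have e3 : m + 1 - (j + 1) ≤ m + 1 - j := by omega
        have e4 : m + 1 - j ≤ m := by omega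
        have := hptle _ _ e3 e4
        linarith
      · have e1 : j = m + 1 := by omega
        subst e1
        have e2 : ¬ (m + 2 ≤ m + 1) := by omega
        simp only [hpt', if_neg hj1, if_neg hj2, if_pos le_rfl, if_neg e2]
        have : m + 1 - (m + 1) = 0 := by omega
        rw [this, h0]
        linarith
  have hsum := hBV (m+2) pt' h0' hlast' hmono'
  have hsub : ∑ k ∈ Finset.range m, ‖R (t - pt (k+1)) - R (t - pt k)‖
      = ∑ k ∈ Finset.range m, ‖R (pt' (k+1+1)) - R (pt' (k+1))‖ := by
    rw [← Finset.sum_range_reflect]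
    refine Finset.sum_congr rfl (fun k hk => ?_)
    rw [Finset.mem_range] at hk
    have e1 : k + 1 ≠ 0 := Nat.succ_ne_zero k
    have e2 : k + 1 + 1 ≠ 0 := Nat.succ_ne_zero _
    have e3 : k + 1 ≤ m + 1 := by omega
    have e4 : k + 1 + 1 ≤ m + 1 := by omega
    simp only [hpt', if_neg e1, if_neg e2, if_pos e3, if_pos e4]
    have e5 : m + 1 - (k + 1) = m - k := by omega
    have e6 : m + 1 - (k + 1 + 1) = m - k - 1 := by omega
    rw [e5, e6]
    have e7 : m - 1 - k + 1 = m - k := by omega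
    have e8 : m - 1 - k = m - k - 1 := by omega
    rw [e7, e8, norm_sub_rev]
  rw [hsub]
  calc ∑ k ∈ Finset.range m, ‖R (pt' (k+1+1)) - R (pt' (k+1))‖
      ≤ ∑ k ∈ Finset.range (m+1), ‖R (pt' (k+1+1)) - R (pt' (k+1))‖ :=
        Finset.sum_le_sum_of_subset_of_nonneg (Finset.range_subset_range.mpr (Nat.le_succ m))
          (fun _ _ _ => norm_nonneg _)
    _ ≤ ∑ k ∈ Finset.range (m+2), ‖R (pt' (k+1)) - R (pt' k)‖ := by
        rw [Finset.sum_range_succ' (fun k => ‖R (pt' (k+1)) - R (pt' k)‖) (m+1)]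
        exact le_add_of_nonneg_right (norm_nonneg _)
    _ ≤ C := hsum

section Prob

lemma zm_right_limit {Ω : Type*} (Z : ℝ → Ω → H) (Zm : ℝ → Ω → H) (ω : Ω)
    (hrc : ∀ t : ℝ, 0 ≤ t → ContinuousWithinAt (fun s => Z s ω) (Set.Ici t) t)
    (hZm : ∀ τ : ℝ, 0 < τ → Tendsto (fun s => Z s ω) (𝓝[<] τ) (𝓝 (Zm τ ω)))
    {τ : ℝ} (hτ : 0 ≤ τ) :
    Tendsto (fun σ => Zm σ ω) (𝓝[>] τ) (𝓝 (Z τ ω)) := by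
  rw [Metric.tendsto_nhdsWithin_nhds]
  intro ε hε
  obtain ⟨δ, hδ, hδ'⟩ := Metric.continuousWithinAt_iff.mp (hrc τ hτ) (ε/2) (by linarith)
  refine ⟨δ, hδ, fun σ hσ hdσ => ?_⟩
  have hστ : τ < σ := hσ
  have hσpos : 0 < σ := lt_of_le_of_lt hτ hστ
  have hev : ∀ᶠ s in 𝓝[<] σ, dist (Z s ω) (Z τ ω) < ε/2 := by
    filter_upwards [Ioo_mem_nhdsLT_of_mem (⟨hστ, le_rfl⟩ : σ ∈ Set.Ioc τ σ)] with s hs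
    refine hδ' (Set.mem_Ici.mpr hs.1.le) ?_
    rw [Real.dist_eq, abs_of_pos (by linarith [hs.1] : (0:ℝ) < s - τ)]
    rw [Real.dist_eq, abs_of_pos (by linarith : (0:ℝ) < σ - τ)] at hdσ
    linarith [hs.2]
  have hlim : Tendsto (fun s => dist (Z s ω) (Z τ ω)) (𝓝[<] σ)
      (𝓝 (dist (Zm σ ω) (Z τ ω))) := (hZm σ hσpos).dist tendsto_const_nhds
  have hle := le_of_tendsto hlim (hev.mono (fun s hs => hs.le))
  calc dist (Zm σ ω) (Z τ ω) ≤ ε/2 := hle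
    _ < ε := by linarith

lemma zm_left_limit {Ω : Type*} (Z : ℝ → Ω → H) (Zm : ℝ → Ω → H) (ω : Ω)
    (hZm : ∀ τ : ℝ, 0 < τ → Tendsto (fun s => Z s ω) (𝓝[<] τ) (𝓝 (Zm τ ω)))
    {τ : ℝ} (hτ : 0 < τ) :
    Tendsto (fun σ => Zm σ ω) (𝓝[<] τ) (𝓝 (Zm τ ω)) := by
  rw [Metric.tendsto_nhdsWithin_nhds]
  intro ε hε
  have hset : {s : ℝ | dist (Z s ω) (Zm τ ω) < ε/2} ∈ 𝓝[<] τ :=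
    (hZm τ hτ) (Metric.ball_mem_nhds _ (by linarith))
  obtain ⟨a, ha, hsub⟩ := mem_nhdsLT_iff_exists_Ioo_subset.mp hset
  have ha' : max a 0 < τ := max_lt ha hτ
  refine ⟨τ - max a 0, by linarith, fun σ hσ hdσ => ?_⟩
  have hστ : σ < τ := hσ
  have hσa : max a 0 < σ := by
    rw [Real.dist_eq] at hdσ
    have := abs_lt.mp hdσ
    linarith [this.1]
  have hσpos : 0 < σ := lt_of_le_of_lt (le_max_right a 0) hσa
  have hev : ∀ᶠ s in 𝓝[<] σ, dist (Z s ω) (Zm τ ω) < ε/2 := by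
    filter_upwards [Ioo_mem_nhdsLT_of_mem (⟨hσa, le_rfl⟩ : σ ∈ Set.Ioc (max a 0) σ)] with s hs
    exact hsub ⟨lt_of_le_of_lt (le_max_left a 0) hs.1, lt_trans hs.2 hστ⟩
  have hlim : Tendsto (fun s => dist (Z s ω) (Zm τ ω)) (𝓝[<] σ)
      (𝓝 (dist (Zm σ ω) (Zm τ ω))) := (hZm σ hσpos).dist tendsto_const_nhds
  have hle := le_of_tendsto hlim (hev.mono (fun s hs => hs.le))
  calc dist (Zm σ ω) (Zm τ ω) ≤ ε/2 := hle
    _ < ε := by linarith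

variable [SecondCountableTopology H] [MeasurableSpace H] [BorelSpace H]

lemma ae_no_jump {Ω : Type*} [MeasurableSpace Ω] (P : Measure Ω) [IsProbabilityMeasure P]
    (Z : ℝ → Ω → H) (hmeas : ∀ s : ℝ, Measurable (Z s))
    (Zm : Ω → H) {τ : ℝ} (hτ : 0 < τ)
    (hcip : ∀ ε : ℝ, 0 < ε →
      Tendsto (fun s => P {ω | ε < ‖Z s ω - Z τ ω‖}) (𝓝[Set.Ici 0] τ) (𝓝 0))
    (hZm : ∀ ω, Tendsto (fun s => Z s ω) (𝓝[<] τ) (𝓝 (Zm ω))) :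
    ∀ᵐ ω ∂P, Z τ ω = Zm ω := by
  set sq : ℕ → ℝ := fun i => τ - τ / (i + 2) with hsq
  have hslt : ∀ i, sq i < τ := by
    intro i
    have : 0 < τ / ((i:ℝ) + 2) := by positivity
    simp only [hsq]
    linarith
  have hspos : ∀ i, 0 < sq i := by
    intro i
    have h2 : τ / ((i:ℝ) + 2) < τ := div_lt_self hτ (by have := Nat.cast_nonneg (α := ℝ) i; linarith)
    simp only [hsq]
    linarith
  have hstend : Tendsto sq atTop (𝓝 τ) := by
    have h1 : Tendsto (fun i : ℕ => (i:ℝ) + 2) atTop atTop :=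
      tendsto_atTop_add_const_right atTop 2 tendsto_natCast_atTop_atTop
    have h2 : Tendsto (fun i : ℕ => τ / ((i:ℝ) + 2)) atTop (𝓝 0) :=
      Tendsto.div_atTop tendsto_const_nhds h1
    have h3 := (tendsto_const_nhds (x := τ) (f := atTop)).sub h2
    rw [sub_zero] at h3
    exact h3
  have hsIio : Tendsto sq atTop (𝓝[<] τ) :=
    tendsto_nhdsWithin_of_tendsto_nhds_of_eventually_within sq hstend
      (Filter.Eventually.of_forall hslt)
  have hsIci : Tendsto sq atTop (𝓝[Set.Ici 0] τ) :=
    tendsto_nhdsWithin_of_tendsto_nhds_of_eventually_within sq hstend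
      (Filter.Eventually.of_forall (fun i => (hspos i).le))
  have h1 : ∀ ω, Tendsto (fun i => Z (sq i) ω) atTop (𝓝 (Zm ω)) :=
    fun ω => (hZm ω).comp hsIio
  have h2 : TendstoInMeasure P (fun i => Z (sq i)) atTop (Z τ) := by
    rw [tendstoInMeasure_iff_dist]
    intro ε hε
    have hsq2 := (hcip (ε/2) (by linarith)).comp hsIci
    refine tendsto_of_tendsto_of_tendsto_of_le_of_le tendsto_const_nhds hsq2
      (fun i => bot_le) (fun i => measure_mono ?_)
    intro ω hω
    rw [Set.mem_setOf_eq, dist_eq_norm] at hω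
    rw [Set.mem_setOf_eq]
    linarith [hω]
  obtain ⟨ns, hns, hae⟩ := h2.exists_seq_tendsto_ae
  filter_upwards [hae] with ω hω
  exact tendsto_nhds_unique hω ((h1 ω).comp hns.tendsto_atTop)

end Prob

lemma unifPart_tag (hub : u < b) : (unifPart hub).tag = (unifPart hub).pt := rfl
lemma unifPartR_m (hub : u < b) : (unifPartR hub).m = (unifPart hub).m := rfl
lemma unifPartR_pt (hub : u < b) : (unifPartR hub).pt = (unifPart hub).pt := rfl
lemma unifPartR_tag (hub : u < b) :
    (unifPartR hub).tag = fun n k => (unifPart hub).pt n (k+1) := rfl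

end Aux

/-- formula (12) of the paper. If the resolvent family has bounded
variation in operator norm, then integration by parts holds `P`-a.s.:
`∫_(u,b] R(t-τ) dZ(τ) = R(t-b)Z(b) - R(t-u)Z(u) - ∫_(u,b] dR(t-τ) Z(τ-)`. -/
theorem stochastic_convolution_integration_by_parts
    {Ω : Type*} [MeasurableSpace Ω] (P : Measure Ω) [IsProbabilityMeasure P]
    {H : Type*} [NormedAddCommGroup H] [InnerProductSpace ℝ H] [CompleteSpace H]
    [SecondCountableTopology H] [MeasurableSpace H] [BorelSpace H]
    (Z : ℝ → Ω → H) (hZ : IsLevyProcess P Z)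
    (a : ℝ → ℝ) (ha : LocallyIntegrableOn a (Set.Ici 0) volume)
    (A : H →ₗ.[ℝ] H) (hAdense : Dense (A.domain : Set H)) (hAclosed : A.IsClosed)
    (R : ℝ → H →L[ℝ] H) (hR : IsResolventFamily a A R)
    (hRBV : ∀ b : ℝ, 0 < b → OpBoundedVariationOn R 0 b)
    (u b t : ℝ) (hu : 0 ≤ u) (hub : u < b) (hbt : b ≤ t)
    (Zm : ℝ → Ω → H)
    (hZm : ∀ ω : Ω, ∀ τ : ℝ, 0 < τ →
      Tendsto (fun s => Z s ω) (nhdsWithin τ (Set.Iio τ)) (nhds (Zm τ ω)))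
    (Y : Ω → H) (hY : IsRSStochIntegral P (fun s => R (t - s)) Z u b Y) :
    ∃ V : Ω → H, ∀ᵐ ω ∂P,
      IsPathRSLimit (fun τ => R (t - τ)) (fun τ => Zm τ ω) u b (V ω) ∧
      Y ω = R (t - b) (Z b ω) - R (t - u) (Z u ω) - V ω := by
  classical
  have ht : 0 < t := lt_of_lt_of_le (lt_of_le_of_lt hu hub) hbt
  obtain ⟨C, hC⟩ := hRBV t ht
  have hRcont : ContinuousOn R (Set.Icc 0 t) :=
    Aux.continuousOn_of_bv_dense ht R hC hAdense hR.strong_cont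
  have hFC : ∀ (m : ℕ) (pt : ℕ → ℝ), pt 0 = u → pt m = b → (∀ k < m, pt k ≤ pt (k+1)) →
      ∑ k ∈ Finset.range m, ‖R (t - pt (k+1)) - R (t - pt k)‖ ≤ C :=
    Aux.bv_transfer R hu hbt hub hC
  have hFcont : ContinuousOn (fun τ => R (t - τ)) (Set.Icc u b) := by
    refine hRcont.comp (Continuous.continuousOn (by continuity)) ?_
    intro τ hτ
    exact ⟨by simp; linarith [hτ.2], by simp; linarith [hτ.1]⟩
  have hgr : ∀ ω : Ω, ∀ τ ∈ Set.Ico u b, ∃ L, Tendsto (fun σ => Zm σ ω) (𝓝[>] τ) (𝓝 L) :=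
    fun ω τ hτ => ⟨Z τ ω, Aux.zm_right_limit Z Zm ω (hZ.rightCont ω) (hZm ω)
      (le_trans hu hτ.1)⟩
  have hgl : ∀ ω : Ω, ∀ τ ∈ Set.Ioc u b, ∃ L, Tendsto (fun σ => Zm σ ω) (𝓝[<] τ) (𝓝 L) :=
    fun ω τ hτ => ⟨Zm τ ω, Aux.zm_left_limit Z Zm ω (hZm ω) (lt_of_le_of_lt hu hτ.1)⟩
  have hkey : ∀ ω : Ω, ∃ v, ∀ π : PartitionSeq u b,
      Tendsto (fun n => ∑ k ∈ Finset.range (π.m n),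
        ((fun τ => R (t - τ)) (π.pt n (k+1)) - (fun τ => R (t - τ)) (π.pt n k))
          (Zm (π.tag n k) ω)) atTop (𝓝 v) :=
    fun ω => Aux.exists_pathRSLimit (fun τ => R (t - τ)) hub hFC hFcont
      (fun τ => Zm τ ω) (hgr ω) (hgl ω)
  choose V hV using hkey
  refine ⟨V, ?_⟩
  -- a.s. no jump at the uniform partition points
  have hdy : ∀ᵐ ω ∂P, ∀ n k : ℕ, k < (Aux.unifPart hub).m n →
      Z ((Aux.unifPart hub).pt n (k+1)) ω = Zm ((Aux.unifPart hub).pt n (k+1)) ω := by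
    rw [ae_all_iff]
    intro n
    rw [ae_all_iff]
    intro k
    by_cases hk : k < (Aux.unifPart hub).m n
    · have h1 : u ≤ (Aux.unifPart hub).pt n k := (Aux.PS.pt_mem (Aux.unifPart hub) n hk.le).1
      have h2 := (Aux.unifPart hub).mono n k hk
      have hpos : 0 < (Aux.unifPart hub).pt n (k+1) := by linarith
      have hnj := Aux.ae_no_jump P Z hZ.measurable (Zm ((Aux.unifPart hub).pt n (k+1))) hpos
        (fun ε hε => hZ.contInProb _ hpos.le ε hε)
        (fun ω => hZm ω _ hpos)
      filter_upwards [hnj] with ω hω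
      exact fun _ => hω
    · exact ae_of_all _ (fun ω hk' => absurd hk' hk)
  -- a.e. convergence of the left-tagged stochastic Riemann sums
  have hae : ∀ᵐ ω ∂P, Tendsto (fun n => ∑ k ∈ Finset.range ((Aux.unifPart hub).m n),
      R (t - (Aux.unifPart hub).tag n k)
        (Z ((Aux.unifPart hub).pt n (k+1)) ω - Z ((Aux.unifPart hub).pt n k) ω)) atTop
      (𝓝 (R (t - b) (Z b ω) - R (t - u) (Z u ω) - V ω)) := by
    filter_upwards [hdy] with ω hω
    have habel : ∀ n, (∑ k ∈ Finset.range ((Aux.unifPart hub).m n),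
        R (t - (Aux.unifPart hub).tag n k)
          (Z ((Aux.unifPart hub).pt n (k+1)) ω - Z ((Aux.unifPart hub).pt n k) ω))
        = R (t - b) (Z b ω) - R (t - u) (Z u ω)
          - ∑ k ∈ Finset.range ((Aux.unifPart hub).m n),
            ((fun τ => R (t - τ)) ((Aux.unifPart hub).pt n (k+1))
              - (fun τ => R (t - τ)) ((Aux.unifPart hub).pt n k))
              (Zm ((Aux.unifPart hub).pt n (k+1)) ω) := by
      intro n
      have h1 := Aux.abel_sum (fun τ => R (t - τ)) (fun τ => Z τ ω)
        ((Aux.unifPart hub).m n) ((Aux.unifPart hub).pt n)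
      rw [(Aux.unifPart hub).right n, (Aux.unifPart hub).left n] at h1
      have h2 : (∑ k ∈ Finset.range ((Aux.unifPart hub).m n),
          ((fun τ => R (t - τ)) ((Aux.unifPart hub).pt n (k+1))
            - (fun τ => R (t - τ)) ((Aux.unifPart hub).pt n k))
            (Z ((Aux.unifPart hub).pt n (k+1)) ω))
          = ∑ k ∈ Finset.range ((Aux.unifPart hub).m n),
          ((fun τ => R (t - τ)) ((Aux.unifPart hub).pt n (k+1))
            - (fun τ => R (t - τ)) ((Aux.unifPart hub).pt n k))
            (Zm ((Aux.unifPart hub).pt n (k+1)) ω) :=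
        Finset.sum_congr rfl (fun k hk => by rw [hω n k (Finset.mem_range.mp hk)])
      rw [h2] at h1
      rw [Aux.unifPart_tag hub]
      exact eq_sub_of_add_eq h1
    have h3 : Tendsto (fun n => ∑ k ∈ Finset.range ((Aux.unifPart hub).m n),
        ((fun τ => R (t - τ)) ((Aux.unifPart hub).pt n (k+1))
          - (fun τ => R (t - τ)) ((Aux.unifPart hub).pt n k))
          (Zm ((Aux.unifPart hub).pt n (k+1)) ω)) atTop (𝓝 (V ω)) := by
      have := hV ω (Aux.unifPartR hub)
      rwa [Aux.unifPartR_m hub, Aux.unifPartR_pt hub, Aux.unifPartR_tag hub] at this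
    have h4 := (tendsto_const_nhds (x := R (t - b) (Z b ω) - R (t - u) (Z u ω))
      (f := atTop)).sub h3
    exact h4.congr (fun n => (habel n).symm)
  have hSm : ∀ n, AEStronglyMeasurable (fun ω => ∑ k ∈ Finset.range ((Aux.unifPart hub).m n),
      R (t - (Aux.unifPart hub).tag n k)
        (Z ((Aux.unifPart hub).pt n (k+1)) ω - Z ((Aux.unifPart hub).pt n k) ω)) P := by
    intro n
    refine Measurable.aestronglyMeasurable ?_
    refine Finset.measurable_sum _ (fun k _ => ?_)
    exact (R (t - (Aux.unifPart hub).tag n k)).continuous.measurable.comp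
      ((hZ.measurable _).sub (hZ.measurable _))
  have him : TendstoInMeasure P (fun n ω => ∑ k ∈ Finset.range ((Aux.unifPart hub).m n),
      R (t - (Aux.unifPart hub).tag n k)
        (Z ((Aux.unifPart hub).pt n (k+1)) ω - Z ((Aux.unifPart hub).pt n k) ω)) atTop
      (fun ω => R (t - b) (Z b ω) - R (t - u) (Z u ω) - V ω) :=
    tendstoInMeasure_of_tendsto_ae hSm hae
  obtain ⟨ns, hns, hYae⟩ := (hY (Aux.unifPart hub)).exists_seq_tendsto_ae
  filter_upwards [hYae, hae] with ω h1 h2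
  refine ⟨fun π => hV ω π, ?_⟩
  exact tendsto_nhds_unique h1 (h2.comp hns.tendsto_atTop)

end
end
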